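/- arXiv:quant-ph/0506189 — 5 statements merged into one kernel-verified Lean document; each statement's English description precedes it below -/
import Mathlib

section
/- Let |ψ⟩ be a unit vector in ℂ^{d}⊗ℂ^{d}⊗ℂ^{d_{A'}}⊗ℂ^{d_{B'}}⊗ℂ^{d_E} (factors labelled A,B,A',B',E). For each pair (k,l) with 0≤k,l≤d−1 let U^{kl} be a unitary on ℂ^{d_{A'}}⊗ℂ^{d_{B'}}, and let U = Σ_{k,l} |kl⟩⟨kl|_{AB} ⊗ U^{kl} be the corresponding twisting acting on the factors A,B,A',B'. Then the matrix ρ̃_{ABE} = Σ_{i,j} |ij⟩⟨ij|_{AB} ⊗ Tr_{A'B'}[(⟨ij|_{AB}⊗I_{A'B'E})|ψ⟩⟨ψ|(|ij⟩_{AB}⊗I_{A'B'E})], obtained from |ψ⟩ by measuring the AB factors in the standard product basis and tracing out A'B', is equal to the corresponding matrix obtained in the same way from the vector (U⊗I_E)|ψ⟩. -/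
open Matrix Kronecker BigOperators
open scoped ComplexOrder Classical

/-- The ccq matrix obtained from a pure state `ψ` on A⊗B⊗A'⊗B'⊗E by measuring the
`AB` factors in the standard product basis and tracing out `A'B'`:
`Σ_{i,j} |ij⟩⟨ij| ⊗ Tr_{A'B'}[(⟨ij|⊗I)|ψ⟩⟨ψ|(|ij⟩⊗I)]`. -/
noncomputable def ccqOfVec {d dA dB dE : ℕ}
    (ψ : ((Fin d × Fin d) × (Fin dA × Fin dB)) × Fin dE → ℂ) :
    Matrix ((Fin d × Fin d) × Fin dE) ((Fin d × Fin d) × Fin dE) ℂ :=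
  ∑ ij : Fin d × Fin d,
    Matrix.single ij ij (1 : ℂ) ⊗ₖ
      (Matrix.of fun e e' : Fin dE =>
        ∑ s : Fin dA × Fin dB, ψ ((ij, s), e) * star (ψ ((ij, s), e')))

/-- a twisting `U = Σ_{k,l} |kl⟩⟨kl| ⊗ U^{kl}` (acting on `ABA'B'`,
extended by the identity on `E`) does not change the ccq matrix obtained by measuring
the `AB` factors in the standard product basis and tracing out `A'B'`. -/
theorem twisting_preserves_ccq {d dA dB dE : ℕ}
    (ψ : ((Fin d × Fin d) × (Fin dA × Fin dB)) × Fin dE → ℂ)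
    (hψ : ∑ x, ‖ψ x‖ ^ 2 = 1)
    (Ukl : Fin d × Fin d → Matrix (Fin dA × Fin dB) (Fin dA × Fin dB) ℂ)
    (hUkl : ∀ kl, Ukl kl ∈ Matrix.unitaryGroup (Fin dA × Fin dB) ℂ) :
    ccqOfVec
      (((∑ kl : Fin d × Fin d, Matrix.single kl kl (1 : ℂ) ⊗ₖ Ukl kl) ⊗ₖ
          (1 : Matrix (Fin dE) (Fin dE) ℂ)).mulVec ψ)
      = ccqOfVec ψ := by
  have hmv : ∀ (ij : Fin d × Fin d) (s : Fin dA × Fin dB) (e : Fin dE),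
      (((∑ kl : Fin d × Fin d, Matrix.single kl kl (1 : ℂ) ⊗ₖ Ukl kl) ⊗ₖ
          (1 : Matrix (Fin dE) (Fin dE) ℂ)).mulVec ψ) ((ij, s), e)
        = ∑ s' : Fin dA × Fin dB, Ukl ij s s' * ψ ((ij, s'), e) := by
    intro ij s e
    rw [Matrix.mulVec]
    simp only [dotProduct, Fintype.sum_prod_type, Matrix.kroneckerMap_apply,
      Matrix.sum_apply, Matrix.one_apply, Matrix.single]
    rw [Finset.sum_comm]
    simp [Finset.sum_ite_eq', Prod.ext_iff, Finset.mul_sum, Finset.sum_mul]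
    simp only [ite_and, Finset.sum_ite_eq, Finset.sum_ite_eq', Finset.mem_univ, if_true]
    simp [Finset.sum_ite_eq, Finset.sum_ite_eq']
  unfold ccqOfVec
  refine Finset.sum_congr rfl fun ij _ => ?_
  refine congrArg (fun M => Matrix.single ij ij (1:ℂ) ⊗ₖ M) ?_
  ext e e'
  simp only [Matrix.of_apply, hmv]
  have hU : ∀ s' s'' : Fin dA × Fin dB,
      (∑ s, (starRingEnd ℂ) (Ukl ij s s'') * Ukl ij s s') = if s'' = s' then 1 else 0 := by
    intro s' s''
    have h := (Matrix.mem_unitaryGroup_iff'.mp (hUkl ij))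
    have := congrArg (fun M : Matrix (Fin dA × Fin dB) (Fin dA × Fin dB) ℂ => M s'' s') h
    simpa [Matrix.mul_apply, Matrix.conjTranspose_apply, Matrix.one_apply] using this
  calc (∑ s, (∑ s', Ukl ij s s' * ψ ((ij, s'), e)) *
          star (∑ s'', Ukl ij s s'' * ψ ((ij, s''), e')))
      = ∑ s' , ∑ s'', (∑ s, star (Ukl ij s s') * Ukl ij s s'') *
          (ψ ((ij, s''), e) * star (ψ ((ij, s'), e'))) := by
        simp only [star_sum, star_mul', Finset.mul_sum, Finset.sum_mul]
        rw [Finset.sum_comm]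
        refine Finset.sum_congr rfl fun s' _ => Finset.sum_comm.trans ?_
        refine Finset.sum_congr rfl fun s'' _ => ?_
        refine Finset.sum_congr rfl fun s _ => by ring
    _ = ∑ s, ψ ((ij, s), e) * star (ψ ((ij, s), e')) := by
        simp [hU]
end

section
/- Let σ be a density matrix (positive semidefinite, trace one) on ℂ²⊗ℂ²⊗ℂ^{d}⊗ℂ^{d'} (factors A,B,A',B'), written in block form σ = Σ_{i,j,k,l∈{0,1}} |ij⟩⟨kl|_{AB} ⊗ A_{ijkl} with A_{ijkl} matrices on ℂ^{d}⊗ℂ^{d'}. Then there exist unitaries U^{ij} on ℂ^{d}⊗ℂ^{d'} such that, setting U = Σ_{i,j}|ij⟩⟨ij|⊗U^{ij} and ρ_{AB} = Tr_{A'B'}(U σ U†), the matrix entry of ρ_{AB} at row |00⟩ and column |11⟩ equals ‖A_{0011}‖₁, the trace norm of A_{0011}. -/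
open Matrix Kronecker BigOperators
open scoped ComplexOrder Classical

/-- The old Mathlib `Matrix.PosSemidef.sqrt` (removed from Mathlib), restored with its
old definition. -/
noncomputable def Matrix.PosSemidef.sqrt {n 𝕜 : Type*} [Fintype n] [DecidableEq n] [RCLike 𝕜]
    {A : Matrix n n 𝕜} (hA : A.PosSemidef) : Matrix n n 𝕜 :=
  hA.1.eigenvectorUnitary.1 * diagonal ((↑) ∘ (√·) ∘ hA.1.eigenvalues) *
    (star hA.1.eigenvectorUnitary : Matrix n n 𝕜)

lemma Matrix.PosSemidef.posSemidef_sqrt {n 𝕜 : Type*} [Fintype n] [DecidableEq n] [RCLike 𝕜]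
    {A : Matrix n n 𝕜} (hA : A.PosSemidef) : hA.sqrt.PosSemidef := by
  unfold Matrix.PosSemidef.sqrt
  have := (posSemidef_diagonal_iff (d := ((↑) ∘ (√·) ∘ hA.1.eigenvalues : n → 𝕜))).mpr
    (fun i => by simp [Function.comp_apply, Real.sqrt_nonneg])
  simpa [Matrix.star_eq_conjTranspose] using this.mul_mul_conjTranspose_same hA.1.eigenvectorUnitary.1

lemma Matrix.PosSemidef.sqrt_mul_self {n 𝕜 : Type*} [Fintype n] [DecidableEq n] [RCLike 𝕜]
    {A : Matrix n n 𝕜} (hA : A.PosSemidef) : hA.sqrt * hA.sqrt = A := by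
  conv_rhs => rw [hA.1.spectral_theorem]
  rw [Unitary.conjStarAlgAut_apply]
  unfold Matrix.PosSemidef.sqrt
  have hu : (star hA.1.eigenvectorUnitary : Matrix n n 𝕜) * hA.1.eigenvectorUnitary.1 = 1 :=
    Unitary.star_mul_self_of_mem hA.1.eigenvectorUnitary.2
  have hd : diagonal ((↑) ∘ (√·) ∘ hA.1.eigenvalues : n → 𝕜) *
      diagonal ((↑) ∘ (√·) ∘ hA.1.eigenvalues) = diagonal (RCLike.ofReal ∘ hA.1.eigenvalues) := by
    rw [diagonal_mul_diagonal]
    congr 1; funext i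
    simp only [Function.comp_apply, ← RCLike.ofReal_mul]
    rw [Real.mul_self_sqrt (hA.eigenvalues_nonneg i)]
  calc _ = hA.1.eigenvectorUnitary.1 * diagonal ((↑) ∘ (√·) ∘ hA.1.eigenvalues) *
      ((star hA.1.eigenvectorUnitary : Matrix n n 𝕜) * hA.1.eigenvectorUnitary.1) *
      diagonal ((↑) ∘ (√·) ∘ hA.1.eigenvalues) * (star hA.1.eigenvectorUnitary : Matrix n n 𝕜) := by
        simp only [Matrix.mul_assoc]
    _ = _ := by rw [hu, Matrix.mul_one, ← hd]; simp only [Matrix.mul_assoc]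

/-- Total matrix square root: `PosSemidef.sqrt` on positive semidefinite matrices,
junk value `0` otherwise. -/
noncomputable def sqrtm {n : Type*} [Fintype n] [DecidableEq n] (M : Matrix n n ℂ) :
    Matrix n n ℂ :=
  if h : M.PosSemidef then h.sqrt else 0

/-- The trace norm `‖X‖₁ = Tr √(X†X)`. -/
noncomputable def traceNorm {n : Type*} [Fintype n] [DecidableEq n] (X : Matrix n n ℂ) : ℝ :=
  ((sqrtm (Xᴴ * X)).trace).re

/-- The block `A_{ijkl}` of a matrix on `(ℂ²⊗ℂ²)⊗(ℂ^d⊗ℂ^{d'})`, i.e. the matrix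
`s t ↦ σ ((i,j),s) ((k,l),t)`. -/
def blk {dA dB : ℕ}
    (σ : Matrix ((Fin 2 × Fin 2) × (Fin dA × Fin dB)) ((Fin 2 × Fin 2) × (Fin dA × Fin dB)) ℂ)
    (p q : Fin 2 × Fin 2) : Matrix (Fin dA × Fin dB) (Fin dA × Fin dB) ℂ :=
  Matrix.of fun s t => σ (p, s) (q, t)

/-- Partial trace over the second tensor factor. -/
noncomputable def ptrace₂ {α β : Type*} [Fintype β]
    (M : Matrix (α × β) (α × β) ℂ) : Matrix α α ℂ :=
  Matrix.of fun a a' => ∑ b : β, M (a, b) (a', b)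


section Aux

open scoped InnerProductSpace

variable {n : Type*} [Fintype n] [DecidableEq n]

lemma toEuclideanLin_mul (M N : Matrix n n ℂ) :
    Matrix.toEuclideanLin (M * N) =
      (Matrix.toEuclideanLin M).comp (Matrix.toEuclideanLin N) := by
  ext x
  simp [Matrix.toEuclideanLin_apply, Matrix.mulVec_mulVec]

lemma polar_exists (A : Matrix n n ℂ) :
    ∃ V ∈ Matrix.unitaryGroup n ℂ,
      A = V * (Matrix.posSemidef_conjTranspose_mul_self A).sqrt := by
  set hP := Matrix.posSemidef_conjTranspose_mul_self A
  set S := hP.sqrt with hSdef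
  have hS : S.PosSemidef := hP.posSemidef_sqrt
  have hSS : S * S = Aᴴ * A := hP.sqrt_mul_self
  set f := Matrix.toEuclideanLin A
  set s := Matrix.toEuclideanLin S
  have hnorm : ∀ x, ‖s x‖ = ‖f x‖ := by
    intro x
    have h1 : ⟪s x, s x⟫_ℂ = ⟪f x, f x⟫_ℂ := by
      have e1 : ⟪s x, s x⟫_ℂ = ⟪x, Matrix.toEuclideanLin (Sᴴ * S) x⟫_ℂ := by
        rw [toEuclideanLin_mul, Matrix.toEuclideanLin_conjTranspose_eq_adjoint]
        simp [LinearMap.adjoint_inner_right]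
        rfl
      have e2 : ⟪f x, f x⟫_ℂ = ⟪x, Matrix.toEuclideanLin (Aᴴ * A) x⟫_ℂ := by
        rw [toEuclideanLin_mul, Matrix.toEuclideanLin_conjTranspose_eq_adjoint]
        simp [LinearMap.adjoint_inner_right]
        rfl
      rw [e1, e2, hS.1.eq, hSS]
    have := congrArg Complex.re h1
    rw [norm_eq_sqrt_re_inner (𝕜 := ℂ), norm_eq_sqrt_re_inner (𝕜 := ℂ), h1]
  -- kernel inclusion
  have hker : LinearMap.ker s ≤ LinearMap.ker f := by
    intro x hx
    simp only [LinearMap.mem_ker] at hx ⊢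
    have := hnorm x
    rw [hx, norm_zero] at this
    exact norm_eq_zero.mp this.symm
  -- the isometry on the range of s
  let φ : LinearMap.range s →ₗ[ℂ] EuclideanSpace ℂ n :=
    ((LinearMap.ker s).liftQ f hker).comp s.quotKerEquivRange.symm.toLinearMap
  have hφ : ∀ x, φ ⟨s x, LinearMap.mem_range_self s x⟩ = f x := by
    intro x
    have h1 : s.quotKerEquivRange.symm ⟨s x, LinearMap.mem_range_self s x⟩ =
        Submodule.Quotient.mk x := by
      rw [LinearEquiv.symm_apply_eq]
      exact Subtype.ext (s.quotKerEquivRange_apply_mk x)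
    simp only [φ, LinearMap.comp_apply, LinearEquiv.coe_toLinearMap, h1]
    rfl
  have hφnorm : ∀ y : LinearMap.range s, ‖φ y‖ = ‖y‖ := by
    rintro ⟨y, x, rfl⟩
    rw [hφ x]
    exact (hnorm x).symm.trans rfl
  let L : LinearMap.range s →ₗᵢ[ℂ] EuclideanSpace ℂ n := ⟨φ, hφnorm⟩
  let W := L.extend
  have hW : ∀ x, W (s x) = f x := by
    intro x
    have h := L.extend_apply ⟨s x, LinearMap.mem_range_self s x⟩
    rw [show ((⟨s x, LinearMap.mem_range_self s x⟩ : LinearMap.range s) :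
        EuclideanSpace ℂ n) = s x from rfl] at h
    exact h.trans (hφ x)
  set V := Matrix.toEuclideanLin.symm W.toLinearMap with hVdef
  have hVlin : Matrix.toEuclideanLin V = W.toLinearMap := Matrix.toEuclideanLin.apply_symm_apply _
  have hVunit : V ∈ Matrix.unitaryGroup n ℂ := by
    rw [Matrix.mem_unitaryGroup_iff']
    apply Matrix.toEuclideanLin.injective
    rw [toEuclideanLin_mul]
    have hadj : Matrix.toEuclideanLin (star V) = LinearMap.adjoint (W.toLinearMap) := by
      rw [Matrix.star_eq_conjTranspose, Matrix.toEuclideanLin_conjTranspose_eq_adjoint, hVlin]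
    rw [hadj, hVlin]
    apply LinearMap.ext
    intro x
    apply ext_inner_right ℂ
    intro y
    rw [LinearMap.comp_apply, LinearMap.adjoint_inner_left]
    rw [show ⟪W.toLinearMap x, W.toLinearMap y⟫_ℂ = ⟪x, y⟫_ℂ from W.inner_map_map x y]
    congr 1
    simp [Matrix.toEuclideanLin_apply, Matrix.one_mulVec]
  refine ⟨V, hVunit, ?_⟩
  apply Matrix.toEuclideanLin.injective
  rw [toEuclideanLin_mul, hVlin]
  apply LinearMap.ext
  intro x
  exact (hW x).symm

lemma twist_entry {dA dB : ℕ}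
    (σ : Matrix ((Fin 2 × Fin 2) × (Fin dA × Fin dB)) ((Fin 2 × Fin 2) × (Fin dA × Fin dB)) ℂ)
    (Uf : Fin 2 × Fin 2 → Matrix (Fin dA × Fin dB) (Fin dA × Fin dB) ℂ) (p q : Fin 2 × Fin 2) :
    ptrace₂
        ((∑ ij : Fin 2 × Fin 2, Matrix.single ij ij (1 : ℂ) ⊗ₖ Uf ij) * σ *
          (∑ ij : Fin 2 × Fin 2, Matrix.single ij ij (1 : ℂ) ⊗ₖ Uf ij)ᴴ) p q
      = (Uf p * blk σ p q * (Uf q)ᴴ).trace := by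
  set T := ∑ ij : Fin 2 × Fin 2, Matrix.single ij ij (1 : ℂ) ⊗ₖ Uf ij with hTdef
  have hT : ∀ a b : (Fin 2 × Fin 2) × (Fin dA × Fin dB),
      T a b = if a.1 = b.1 then Uf a.1 a.2 b.2 else 0 := by
    rintro ⟨p₁, s₁⟩ ⟨q₁, t₁⟩
    simp only [hTdef, Matrix.sum_apply, Matrix.kroneckerMap_apply, Matrix.single,
      Matrix.of_apply, ite_mul, one_mul, zero_mul]
    by_cases h : p₁ = q₁
    · subst h
      rw [Finset.sum_eq_single p₁]
      · simp
      · intro b _ hb; simp [hb]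
      · simp
    · rw [Finset.sum_eq_zero, if_neg h]
      intro ij _
      rw [if_neg]
      rintro ⟨rfl, rfl⟩
      exact h rfl
  have hblk : ∀ st tt : Fin dA × Fin dB,
      (T * σ * Tᴴ) ((p, st)) ((q, tt)) = (Uf p * blk σ p q * (Uf q)ᴴ) st tt := by
    intro st tt
    rw [Matrix.mul_apply]
    rw [Fintype.sum_prod_type]
    rw [Finset.sum_eq_single q (fun b _ hb => ?_) (by simp)]
    swap
    · apply Finset.sum_eq_zero
      intro t₁ _
      rw [Matrix.conjTranspose_apply, hT]
      simp [Ne.symm hb]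
    have hin : ∀ t₁, (T * σ) ((p, st)) ((q, t₁)) =
        ∑ s₁, Uf p st s₁ * σ ((p, s₁)) ((q, t₁)) := by
      intro t₁
      rw [Matrix.mul_apply, Fintype.sum_prod_type]
      rw [Finset.sum_eq_single p (fun b _ hb => ?_) (by simp)]
      swap
      · apply Finset.sum_eq_zero
        intro s₁ _
        rw [hT]
        simp [Ne.symm hb]
      apply Finset.sum_congr rfl
      intro s₁ _
      rw [hT]
      simp
    simp only [hin, Matrix.conjTranspose_apply, hT]
    simp [Matrix.mul_apply, blk]
  simp only [ptrace₂, Matrix.of_apply, hblk, Matrix.trace, Matrix.diag]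

end Aux

/-- for any density matrix `σ` on `ℂ²⊗ℂ²⊗ℂ^d⊗ℂ^{d'}` there is a twisting
`U = Σ_{ij}|ij⟩⟨ij|⊗U^{ij}` such that the `(|00⟩,|11⟩)` entry of `Tr_{A'B'}(UσU†)`
equals the trace norm of the block `A_{0011}`. -/
theorem exists_twisting_entry_eq_traceNorm {dA dB : ℕ}
    (σ : Matrix ((Fin 2 × Fin 2) × (Fin dA × Fin dB)) ((Fin 2 × Fin 2) × (Fin dA × Fin dB)) ℂ)
    (hσ : σ.PosSemidef) (hσtr : σ.trace = 1) :
    ∃ Uij : Fin 2 × Fin 2 → Matrix (Fin dA × Fin dB) (Fin dA × Fin dB) ℂ,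
      (∀ ij, Uij ij ∈ Matrix.unitaryGroup (Fin dA × Fin dB) ℂ) ∧
      (ptrace₂
          ((∑ ij : Fin 2 × Fin 2, Matrix.single ij ij (1 : ℂ) ⊗ₖ Uij ij) * σ *
            (∑ ij : Fin 2 × Fin 2, Matrix.single ij ij (1 : ℂ) ⊗ₖ Uij ij)ᴴ))
          ((0 : Fin 2), (0 : Fin 2)) ((1 : Fin 2), (1 : Fin 2))
        = (traceNorm (blk σ ((0 : Fin 2), (0 : Fin 2)) ((1 : Fin 2), (1 : Fin 2))) : ℂ) := by
    classical
  set A := blk σ ((0 : Fin 2), (0 : Fin 2)) ((1 : Fin 2), (1 : Fin 2)) with hAdef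
  obtain ⟨V, hV, hA⟩ := polar_exists A
  set S := (Matrix.posSemidef_conjTranspose_mul_self A).sqrt with hSdef
  refine ⟨fun ij => if ij = ((1 : Fin 2), (1 : Fin 2)) then V else 1, fun ij => ?_, ?_⟩
  · dsimp only
    split
    · exact hV
    · exact Submonoid.one_mem _
  · rw [twist_entry]
    have h00 : (if ((0 : Fin 2), (0 : Fin 2)) = ((1 : Fin 2), (1 : Fin 2)) then V
        else (1 : Matrix (Fin dA × Fin dB) (Fin dA × Fin dB) ℂ)) = 1 := by
      rw [if_neg (by decide)]
    have h11 : (if ((1 : Fin 2), (1 : Fin 2)) = ((1 : Fin 2), (1 : Fin 2)) then V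
        else (1 : Matrix (Fin dA × Fin dB) (Fin dA × Fin dB) ℂ)) = V := by
      rw [if_pos rfl]
    rw [h00, h11, Matrix.one_mul]
    have h1 : A * Vᴴ = V * S * Vᴴ := by rw [← hA]
    have hcyc : (V * S * Vᴴ).trace = (Vᴴ * (V * S)).trace := by
      rw [Matrix.trace_mul_comm]
    have hVu : Vᴴ * V = 1 := by
      have := Matrix.mem_unitaryGroup_iff'.mp hV
      simpa [Matrix.star_eq_conjTranspose] using this
    have hSm : sqrtm (Aᴴ * A) = S := by
      rw [sqrtm, dif_pos (Matrix.posSemidef_conjTranspose_mul_self A)]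
    rw [h1, hcyc, ← Matrix.mul_assoc, hVu, Matrix.one_mul, traceNorm, hSm]
    have hH : S.IsHermitian := (Matrix.posSemidef_conjTranspose_mul_self A).posSemidef_sqrt.1
    have : (starRingEnd ℂ) S.trace = S.trace := by
      rw [show (starRingEnd ℂ) S.trace = star S.trace from rfl, ← Matrix.trace_conjTranspose, hH.eq]
    exact (Complex.conj_eq_iff_re.mp this).symm
end

section
/- Let ρ be a density matrix on ℂ^{d}⊗ℂ^{d}⊗ℂ^{d_{A'}}⊗ℂ^{d_{B'}} (factors A,B,A',B') and let {|e_i f_j⟩}_{i,j=0}^{d−1} be a product orthonormal basis of the AB factors. Then the following are equivalent: (1) for every unit vector |ψ⟩ in ℂ^{d}⊗ℂ^{d}⊗ℂ^{d_{A'}}⊗ℂ^{d_{B'}}⊗ℂ^{d_E} purifying ρ (i.e. Tr_E|ψ⟩⟨ψ| = ρ), there exists a density matrix ρ_E on ℂ^{d_E} such that Σ_{i,j} |e_i f_j⟩⟨e_i f_j| ⊗ Tr_{A'B'}[(⟨e_i f_j|⊗I_{A'B'E})|ψ⟩⟨ψ|(|e_i f_j⟩⊗I_{A'B'E})] = (Σ_{i=0}^{d−1}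 (1/d)|e_i f_i⟩⟨e_i f_i|) ⊗ ρ_E; (2) there exist a density matrix σ on ℂ^{d_{A'}}⊗ℂ^{d_{B'}} and unitaries U_0,…,U_{d−1} on ℂ^{d_{A'}}⊗ℂ^{d_{B'}} such that ρ = (1/d) Σ_{i,j=0}^{d−1} |e_i f_i⟩⟨e_j f_j| ⊗ U_i σ U_j†. -/
open Matrix Kronecker BigOperators
open scoped ComplexOrder Classical

/-- The product basis vector `|e_i f_j⟩` of `ℂ^d ⊗ ℂ^d` built from two families of
vectors `e, f` in `ℂ^d`. -/
def prodVec {d : ℕ} (e f : Fin d → (Fin d → ℂ)) (i j : Fin d) : Fin d × Fin d → ℂ :=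
  fun ab => e i ab.1 * f j ab.2

/-- The (unnormalized) vector `(⟨e_i f_j| ⊗ I_{A'B'E})|ψ⟩` on `A'B'E`. -/
noncomputable def measVec {d dA dB dE : ℕ} (e f : Fin d → (Fin d → ℂ))
    (ψ : ((Fin d × Fin d) × (Fin dA × Fin dB)) × Fin dE → ℂ) (i j : Fin d)
    (s : Fin dA × Fin dB) (ε : Fin dE) : ℂ :=
  ∑ ab : Fin d × Fin d, star (prodVec e f i j ab) * ψ ((ab, s), ε)

/-- The ccq state `Σ_{i,j} |e_i f_j⟩⟨e_i f_j| ⊗ Tr_{A'B'}[(⟨e_i f_j|⊗I)|ψ⟩⟨ψ|(|e_i f_j⟩⊗I)]`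
obtained from the purification `ψ` by measuring `AB` in the basis `{|e_i f_j⟩}` and
tracing out `A'B'`. -/
noncomputable def ccqOf {d dA dB dE : ℕ} (e f : Fin d → (Fin d → ℂ))
    (ψ : ((Fin d × Fin d) × (Fin dA × Fin dB)) × Fin dE → ℂ) :
    Matrix ((Fin d × Fin d) × Fin dE) ((Fin d × Fin d) × Fin dE) ℂ :=
  ∑ i : Fin d, ∑ j : Fin d,
    Matrix.vecMulVec (prodVec e f i j) (star (prodVec e f i j)) ⊗ₖ
      (Matrix.of fun ε ε' : Fin dE =>
        ∑ s : Fin dA × Fin dB, measVec e f ψ i j s ε * star (measVec e f ψ i j s ε'))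


theorem Matrix.toEuclideanLin_apply_piLp_equiv_symm {m n : Type*} [Fintype m] [DecidableEq m]
    [Fintype n] [DecidableEq n] (M : Matrix m n ℂ) (v : n → ℂ) :
    Matrix.toEuclideanLin M ((WithLp.equiv 2 (n → ℂ)).symm v)
      = (WithLp.equiv 2 (m → ℂ)).symm (M *ᵥ v) := rfl

open scoped MatrixOrder in
lemma psd_sqrt_exists {n : Type*} [Fintype n] [DecidableEq n] (A : Matrix n n ℂ)
    (hA : A.PosSemidef) : ∃ Q : Matrix n n ℂ, Qᴴ = Q ∧ Q * Q = A :=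
  ⟨CFC.sqrt A, (CFC.sqrt_nonneg A).posSemidef.1, CFC.sqrt_mul_sqrt_self A hA.nonneg⟩

set_option maxHeartbeats 1000000 in
lemma exists_unitary_factor {m n : Type*} [Fintype m] [DecidableEq m] [Fintype n] [DecidableEq n]
    (A B : Matrix m n ℂ) (h : Aᴴ * A = Bᴴ * B) :
    ∃ U : Matrix m m ℂ, U ∈ Matrix.unitaryGroup m ℂ ∧ A = U * B := by
  classical
  set fA := Matrix.toEuclideanLin A with hfA
  set fB := Matrix.toEuclideanLin B with hfB
  have hdot : ∀ (M : Matrix m n ℂ) (x y : EuclideanSpace ℂ n),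
      (inner ℂ (Matrix.toEuclideanLin M x) (Matrix.toEuclideanLin M y) : ℂ)
        = (star (WithLp.equiv 2 (n → ℂ) x)) ᵥ* (Mᴴ * M) ⬝ᵥ (WithLp.equiv 2 (n → ℂ) y) := by
    intro M x y
    rw [PiLp.inner_apply]
    simp only [RCLike.inner_apply]
    calc (∑ i, (Matrix.toEuclideanLin M y i) * (starRingEnd ℂ) (Matrix.toEuclideanLin M x i))
        = star (M *ᵥ (WithLp.equiv 2 (n → ℂ) x)) ⬝ᵥ (M *ᵥ (WithLp.equiv 2 (n → ℂ) y)) :=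
          Finset.sum_congr rfl fun _ _ => mul_comm _ _
      _ = _ := by
          rw [Matrix.star_mulVec, Matrix.dotProduct_mulVec, Matrix.vecMul_vecMul]
  have hinner : ∀ x y : EuclideanSpace ℂ n, (inner ℂ (fA x) (fA y) : ℂ) = inner ℂ (fB x) (fB y) := by
    intro x y; rw [hfA, hfB, hdot, hdot, h]
  have hnorm : ∀ x, ‖fA x‖ = ‖fB x‖ := by
    intro x
    rw [@norm_eq_sqrt_re_inner ℂ, @norm_eq_sqrt_re_inner ℂ, hinner]
  have hker : LinearMap.ker fB ≤ LinearMap.ker fA := by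
    intro x hx
    rw [LinearMap.mem_ker] at hx ⊢
    have := hnorm x
    rw [hx, norm_zero, norm_eq_zero] at this
    exact this
  let g : ↥(LinearMap.range fB) →ₗ[ℂ] EuclideanSpace ℂ m :=
    ((LinearMap.ker fB).liftQ fA hker) ∘ₗ (fB.quotKerEquivRange.symm : _ →ₗ[ℂ] _)
  have hg : ∀ x : EuclideanSpace ℂ n, g ⟨fB x, LinearMap.mem_range_self fB x⟩ = fA x := by
    intro x
    have h1 : fB.quotKerEquivRange.symm ⟨fB x, LinearMap.mem_range_self fB x⟩
        = (LinearMap.ker fB).mkQ x :=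
      fB.quotKerEquivRange_symm_apply_image x (LinearMap.mem_range_self fB x)
    simp only [g, LinearMap.comp_apply, LinearEquiv.coe_coe, h1, Submodule.mkQ_apply,
      Submodule.liftQ_apply]
  have hgnorm : ∀ s : ↥(LinearMap.range fB), ‖g s‖ = ‖s‖ := by
    rintro ⟨v, x, rfl⟩
    rw [hg x]
    exact (hnorm x).trans rfl
  let ι : ↥(LinearMap.range fB) →ₗᵢ[ℂ] EuclideanSpace ℂ m := ⟨g, hgnorm⟩
  let Uiso := ι.extend
  have hUext : ∀ x : EuclideanSpace ℂ n, Uiso (fB x) = fA x := by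
    intro x
    have := ι.extend_apply ⟨fB x, LinearMap.mem_range_self fB x⟩
    simpa [ι, hg x] using this
  let U : Matrix m m ℂ := Matrix.toEuclideanLin.symm Uiso.toLinearMap
  have hU : Matrix.toEuclideanLin U = Uiso.toLinearMap := Matrix.toEuclideanLin.apply_symm_apply _
  have hUinner : ∀ x y : EuclideanSpace ℂ m, (inner ℂ (Uiso x) (Uiso y) : ℂ) = inner ℂ x y :=
    fun x y => Uiso.inner_map_map x y
  have hcol : ∀ j, Uiso ((WithLp.equiv 2 (m → ℂ)).symm (Pi.single j 1))
      = (WithLp.equiv 2 (m → ℂ)).symm (fun s => U s j) := by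
    intro j
    have h2 : Matrix.toEuclideanLin U ((WithLp.equiv 2 (m → ℂ)).symm (Pi.single j 1))
        = (WithLp.equiv 2 (m → ℂ)).symm (U *ᵥ Pi.single j 1) :=
      Matrix.toEuclideanLin_apply_piLp_equiv_symm U _
    rw [hU] at h2
    rw [show (Uiso ((WithLp.equiv 2 (m → ℂ)).symm (Pi.single j 1)))
        = Uiso.toLinearMap ((WithLp.equiv 2 (m → ℂ)).symm (Pi.single j 1)) from rfl, h2]
    congr 1
    funext s
    rw [Matrix.mulVec_single]
    exact mul_one _
  have hunit : U ∈ Matrix.unitaryGroup m ℂ := by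
    rw [Matrix.mem_unitaryGroup_iff']
    ext j k
    have h3 : (inner ℂ (Uiso ((WithLp.equiv 2 (m → ℂ)).symm (Pi.single j 1)))
        (Uiso ((WithLp.equiv 2 (m → ℂ)).symm (Pi.single k 1))) : ℂ)
        = inner ℂ ((WithLp.equiv 2 (m → ℂ)).symm (Pi.single j 1))
            ((WithLp.equiv 2 (m → ℂ)).symm (Pi.single k 1)) := hUinner _ _
    rw [hcol, hcol] at h3
    have hL : (inner ℂ ((WithLp.equiv 2 (m → ℂ)).symm (fun s => U s j))
        ((WithLp.equiv 2 (m → ℂ)).symm (fun s => U s k)) : ℂ)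
        = ∑ s, (starRingEnd ℂ) (U s j) * U s k := by
      rw [PiLp.inner_apply]; exact Finset.sum_congr rfl fun _ _ => mul_comm _ _
    have hR : (inner ℂ ((WithLp.equiv 2 (m → ℂ)).symm (Pi.single j 1))
        ((WithLp.equiv 2 (m → ℂ)).symm ((Pi.single k 1 : m → ℂ))) : ℂ)
        = ∑ s, (starRingEnd ℂ) ((Pi.single j 1 : m → ℂ) s) * (Pi.single k 1 : m → ℂ) s := by
      rw [PiLp.inner_apply]; exact Finset.sum_congr rfl fun _ _ => mul_comm _ _
    rw [hL, hR] at h3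
    calc (star U * U) j k = ∑ s, (starRingEnd ℂ) (U s j) * U s k := by
          rw [Matrix.mul_apply]
          refine Finset.sum_congr rfl fun s _ => ?_
          rfl
      _ = ∑ s, (starRingEnd ℂ) ((Pi.single j 1 : m → ℂ) s) * (Pi.single k 1 : m → ℂ) s := h3
      _ = (1 : Matrix m m ℂ) j k := by
          rcases eq_or_ne j k with rfl | hjk
          · rw [Matrix.one_apply_eq]
            rw [Finset.sum_eq_single j]
            · simp
            · intro b _ hb
              simp [Pi.single_apply, hb]
            · simp
          · rw [Matrix.one_apply_ne hjk]
            apply Finset.sum_eq_zero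
            intro b _
            rcases eq_or_ne b j with rfl | hbj
            · simp [Pi.single_apply, hjk]
            · simp [Pi.single_apply, hbj]
  refine ⟨U, hunit, ?_⟩
  have hv : ∀ x : n → ℂ, A *ᵥ x = (U * B) *ᵥ x := by
    intro x
    have h2 := hUext ((WithLp.equiv 2 (n → ℂ)).symm x)
    have h3 : fB ((WithLp.equiv 2 (n → ℂ)).symm x) = (WithLp.equiv 2 (m → ℂ)).symm (B *ᵥ x) :=
      Matrix.toEuclideanLin_apply_piLp_equiv_symm B x
    have h4 : fA ((WithLp.equiv 2 (n → ℂ)).symm x) = (WithLp.equiv 2 (m → ℂ)).symm (A *ᵥ x) :=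
      Matrix.toEuclideanLin_apply_piLp_equiv_symm A x
    rw [h3, h4] at h2
    have h5 : Uiso ((WithLp.equiv 2 (m → ℂ)).symm (B *ᵥ x))
        = Matrix.toEuclideanLin U ((WithLp.equiv 2 (m → ℂ)).symm (B *ᵥ x)) := by rw [hU]; rfl
    rw [h5, Matrix.toEuclideanLin_apply_piLp_equiv_symm] at h2
    have h6 := congrArg (WithLp.equiv 2 (m → ℂ)) h2
    simp only [Equiv.apply_symm_apply] at h6
    rw [← h6, Matrix.mulVec_mulVec]
  ext i j
  have := congrFun (hv (Pi.single j 1)) i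
  rw [Matrix.mulVec_single, Matrix.mulVec_single] at this
  simpa using this

section helpers
variable {d : ℕ} {e f : Fin d → (Fin d → ℂ)}

lemma prodVec_on (he : ∀ i j, (∑ a, star (e i a) * e j a) = if i = j then (1 : ℂ) else 0)
    (hf : ∀ i j, (∑ a, star (f i a) * f j a) = if i = j then (1 : ℂ) else 0)
    (i j k l : Fin d) :
    (∑ ab : Fin d × Fin d, star (prodVec e f i j ab) * prodVec e f k l ab)
      = if i = k ∧ j = l then (1 : ℂ) else 0 := by
  have : (∑ ab : Fin d × Fin d, star (prodVec e f i j ab) * prodVec e f k l ab)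
      = (∑ a, star (e i a) * e k a) * (∑ b, star (f j b) * f l b) := by
    rw [Finset.sum_mul_sum, ← Finset.univ_product_univ, Finset.sum_product]
    refine Finset.sum_congr rfl fun a _ => Finset.sum_congr rfl fun b _ => ?_
    simp only [prodVec, star_mul']
    ring
  rw [this, he, hf]
  rcases eq_or_ne i k with rfl | hik
  · rcases eq_or_ne j l with rfl | hjl
    · simp
    · simp [hjl]
  · simp [hik]

lemma prodVec_complete (he : ∀ i j, (∑ a, star (e i a) * e j a) = if i = j then (1 : ℂ) else 0)
    (hf : ∀ i j, (∑ a, star (f i a) * f j a) = if i = j then (1 : ℂ) else 0)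
    (ab ab' : Fin d × Fin d) :
    (∑ p : Fin d × Fin d, prodVec e f p.1 p.2 ab * star (prodVec e f p.1 p.2 ab'))
      = if ab = ab' then (1 : ℂ) else 0 := by
  classical
  let W : Matrix (Fin d × Fin d) (Fin d × Fin d) ℂ := Matrix.of fun p ab => star (prodVec e f p.1 p.2 ab)
  have hWWH : W * Wᴴ = 1 := by
    ext p q
    rw [Matrix.mul_apply, Matrix.one_apply]
    have : ∀ ab, W p ab * Wᴴ ab q = star (prodVec e f p.1 p.2 ab) * prodVec e f q.1 q.2 ab := by
      intro ab
      simp [W, Matrix.conjTranspose_apply]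
    rw [Finset.sum_congr rfl fun ab _ => this ab, prodVec_on he hf]
    rcases eq_or_ne p q with rfl | hpq
    · simp
    · have : ¬(p.1 = q.1 ∧ p.2 = q.2) := by
        intro h; exact hpq (Prod.ext h.1 h.2)
      simp [hpq, this]
  have hWHW : Wᴴ * W = 1 := mul_eq_one_comm.mp hWWH
  have h2 : (Wᴴ * W) ab ab' = (1 : Matrix (Fin d × Fin d) (Fin d × Fin d) ℂ) ab ab' := by
    rw [hWHW]
  rw [Matrix.mul_apply] at h2
  rw [show (∑ p : Fin d × Fin d, prodVec e f p.1 p.2 ab * star (prodVec e f p.1 p.2 ab'))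
      = ∑ p, Wᴴ ab p * W p ab' from ?_]
  · rw [h2, Matrix.one_apply]
  · refine Finset.sum_congr rfl fun p _ => ?_
    simp [W, Matrix.conjTranspose_apply]
end helpers

/-- The measurement matrix `X_{ij} : Matrix S E`. -/
noncomputable def measM {d dA dB dE : ℕ} (e f : Fin d → (Fin d → ℂ))
    (ψ : ((Fin d × Fin d) × (Fin dA × Fin dB)) × Fin dE → ℂ) (i j : Fin d) :
    Matrix (Fin dA × Fin dB) (Fin dE) ℂ :=
  Matrix.of fun s ε => measVec e f ψ i j s ε

section helpers
variable {d dA dB dE : ℕ} {e f : Fin d → (Fin d → ℂ)}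
  {ρ : Matrix ((Fin d × Fin d) × (Fin dA × Fin dB)) ((Fin d × Fin d) × (Fin dA × Fin dB)) ℂ}
  {ψ : ((Fin d × Fin d) × (Fin dA × Fin dB)) × Fin dE → ℂ}

lemma measM_gram (hpur : ∀ x y, (∑ ε : Fin dE, ψ (x, ε) * star (ψ (y, ε))) = ρ x y)
    (i j k l : Fin d) :
    measM e f ψ i j * (measM e f ψ k l)ᴴ
      = Matrix.of fun (s s' : Fin dA × Fin dB) => ∑ ab : Fin d × Fin d, ∑ ab' : Fin d × Fin d,
          star (prodVec e f i j ab) * ρ (ab, s) (ab', s') * prodVec e f k l ab' := by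
  ext s s'
  rw [Matrix.mul_apply, Matrix.of_apply]
  have expand : ∀ ε, measM e f ψ i j s ε * (measM e f ψ k l)ᴴ ε s'
      = ∑ ab : Fin d × Fin d, ∑ ab' : Fin d × Fin d,
          star (prodVec e f i j ab) * ψ ((ab, s), ε) *
            (prodVec e f k l ab' * star (ψ ((ab', s'), ε))) := by
    intro ε
    rw [Matrix.conjTranspose_apply]
    show measVec e f ψ i j s ε * star (measVec e f ψ k l s' ε) = _
    rw [measVec, measVec, star_sum, Finset.sum_mul_sum]
    refine Finset.sum_congr rfl fun ab _ => Finset.sum_congr rfl fun ab' _ => ?_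
    rw [star_mul', star_star]
  rw [Finset.sum_congr rfl fun ε _ => expand ε]
  rw [Finset.sum_comm]
  refine Finset.sum_congr rfl fun ab _ => ?_
  rw [Finset.sum_comm]
  refine Finset.sum_congr rfl fun ab' _ => ?_
  have h2 : ∀ ε, star (prodVec e f i j ab) * ψ ((ab, s), ε) *
      (prodVec e f k l ab' * star (ψ ((ab', s'), ε)))
      = star (prodVec e f i j ab) * prodVec e f k l ab' *
          (ψ ((ab, s), ε) * star (ψ ((ab', s'), ε))) := by
    intro ε; ring
  rw [Finset.sum_congr rfl fun ε _ => h2 ε, ← Finset.mul_sum, hpur]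
  ring
end helpers

section sandwich
variable {d dA dB dE : ℕ} {e f : Fin d → (Fin d → ℂ)}

lemma sandwich_kron
    (he : ∀ i j, (∑ a, star (e i a) * e j a) = if i = j then (1 : ℂ) else 0)
    (hf : ∀ i j, (∑ a, star (f i a) * f j a) = if i = j then (1 : ℂ) else 0)
    (i j k l : Fin d) (B : Matrix (Fin dE) (Fin dE) ℂ) (ε ε' : Fin dE) :
    (∑ ab : Fin d × Fin d, ∑ ab' : Fin d × Fin d, star (prodVec e f k l ab) *
        ((Matrix.vecMulVec (prodVec e f i j) (star (prodVec e f i j)) ⊗ₖ B) (ab, ε) (ab', ε')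
          * prodVec e f k l ab'))
      = (if i = k ∧ j = l then (1 : ℂ) else 0) * B ε ε' := by
  have h1 : ∀ ab ab' : Fin d × Fin d, star (prodVec e f k l ab) *
      ((Matrix.vecMulVec (prodVec e f i j) (star (prodVec e f i j)) ⊗ₖ B) (ab, ε) (ab', ε')
        * prodVec e f k l ab')
      = (star (prodVec e f k l ab) * prodVec e f i j ab) *
          ((star (prodVec e f i j ab') * prodVec e f k l ab') * B ε ε') := by
    intro ab ab'
    rw [Matrix.kroneckerMap_apply, Matrix.vecMulVec_apply, Pi.star_apply]
    ring
  rw [Finset.sum_congr rfl fun ab _ => Finset.sum_congr rfl fun ab' _ => h1 ab ab']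
  rw [← Finset.sum_mul_sum, prodVec_on he hf k l i j, ← Finset.sum_mul,
    prodVec_on he hf i j k l]
  rcases eq_or_ne i k with rfl | hik
  · rcases eq_or_ne j l with rfl | hjl
    · simp
    · simp [hjl]
  · simp [hik, fun h : k = i => hik h.symm]
end sandwich

section extract
variable {d dA dB dE : ℕ} {e f : Fin d → (Fin d → ℂ)}

lemma sum_swap_4 {α β γ δ : Type*} [Fintype α] [Fintype β] [Fintype γ] [Fintype δ]
    (F : α → β → γ → δ → ℂ) :
    (∑ a : α, ∑ b : β, ∑ c : γ, ∑ x : δ, F a b c x)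
      = ∑ c : γ, ∑ x : δ, ∑ a : α, ∑ b : β, F a b c x := by
  have h1 : ∀ a : α, (∑ b : β, ∑ c : γ, ∑ x : δ, F a b c x)
      = ∑ c : γ, ∑ x : δ, ∑ b : β, F a b c x := by
    intro a
    rw [Finset.sum_comm]
    exact Finset.sum_congr rfl fun c _ => Finset.sum_comm
  rw [Finset.sum_congr rfl fun a _ => h1 a, Finset.sum_comm]
  exact Finset.sum_congr rfl fun c _ => Finset.sum_comm

lemma extract_ccq
    (he : ∀ i j, (∑ a, star (e i a) * e j a) = if i = j then (1 : ℂ) else 0)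
    (hf : ∀ i j, (∑ a, star (f i a) * f j a) = if i = j then (1 : ℂ) else 0)
    (ψ : ((Fin d × Fin d) × (Fin dA × Fin dB)) × Fin dE → ℂ) (k l : Fin d) (ε ε' : Fin dE) :
    (∑ ab : Fin d × Fin d, ∑ ab' : Fin d × Fin d, star (prodVec e f k l ab) *
        (ccqOf e f ψ (ab, ε) (ab', ε') * prodVec e f k l ab'))
    = ∑ s : Fin dA × Fin dB, measVec e f ψ k l s ε * star (measVec e f ψ k l s ε') := by
  classical
  set B : Fin d → Fin d → Matrix (Fin dE) (Fin dE) ℂ := fun i j =>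
    Matrix.of fun ε ε' : Fin dE =>
      ∑ s : Fin dA × Fin dB, measVec e f ψ i j s ε * star (measVec e f ψ i j s ε') with hB
  have hstep : ∀ ab ab' : Fin d × Fin d, star (prodVec e f k l ab) *
      (ccqOf e f ψ (ab, ε) (ab', ε') * prodVec e f k l ab')
      = ∑ i, ∑ j, star (prodVec e f k l ab) *
          ((Matrix.vecMulVec (prodVec e f i j) (star (prodVec e f i j)) ⊗ₖ B i j) (ab, ε) (ab', ε')
            * prodVec e f k l ab') := by
    intro ab ab'
    have : ccqOf e f ψ (ab, ε) (ab', ε') = ∑ i, ∑ j,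
        (Matrix.vecMulVec (prodVec e f i j) (star (prodVec e f i j)) ⊗ₖ B i j) (ab, ε) (ab', ε') := by
      rw [ccqOf]
      simp [Matrix.sum_apply, hB]
    rw [this, Finset.sum_mul, Finset.mul_sum]
    refine Finset.sum_congr rfl fun i _ => ?_
    rw [Finset.sum_mul, Finset.mul_sum]
  rw [Finset.sum_congr rfl fun ab _ => Finset.sum_congr rfl fun ab' _ => hstep ab ab']
  rw [sum_swap_4]
  rw [Finset.sum_congr rfl fun i _ => Finset.sum_congr rfl fun j _ =>
    sandwich_kron he hf i j k l (B i j) ε ε']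
  rw [Finset.sum_eq_single k]
  · rw [Finset.sum_eq_single l]
    · simp [hB]
    · intro j _ hj
      simp [hj]
    · simp
  · intro i _ hi
    apply Finset.sum_eq_zero
    intro j _
    simp [hi]
  · simp

lemma extract_ideal
    (he : ∀ i j, (∑ a, star (e i a) * e j a) = if i = j then (1 : ℂ) else 0)
    (hf : ∀ i j, (∑ a, star (f i a) * f j a) = if i = j then (1 : ℂ) else 0)
    (ρE : Matrix (Fin dE) (Fin dE) ℂ) (k l : Fin d) (ε ε' : Fin dE) :
    (∑ ab : Fin d × Fin d, ∑ ab' : Fin d × Fin d, star (prodVec e f k l ab) *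
        ((((∑ i : Fin d, ((1 : ℂ) / d) •
            Matrix.vecMulVec (prodVec e f i i) (star (prodVec e f i i))) ⊗ₖ ρE) (ab, ε) (ab', ε'))
          * prodVec e f k l ab'))
    = if k = l then ((1 : ℂ) / d) * ρE ε ε' else 0 := by
  classical
  have hstep : ∀ ab ab' : Fin d × Fin d, star (prodVec e f k l ab) *
      ((((∑ i : Fin d, ((1 : ℂ) / d) •
          Matrix.vecMulVec (prodVec e f i i) (star (prodVec e f i i))) ⊗ₖ ρE) (ab, ε) (ab', ε'))
        * prodVec e f k l ab')
      = ∑ i, ((1 : ℂ) / d) * (star (prodVec e f k l ab) *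
          ((Matrix.vecMulVec (prodVec e f i i) (star (prodVec e f i i)) ⊗ₖ ρE) (ab, ε) (ab', ε')
            * prodVec e f k l ab')) := by
    intro ab ab'
    have : (((∑ i : Fin d, ((1 : ℂ) / d) •
        Matrix.vecMulVec (prodVec e f i i) (star (prodVec e f i i))) ⊗ₖ ρE) (ab, ε) (ab', ε'))
        = ∑ i, ((1 : ℂ) / d) *
            ((Matrix.vecMulVec (prodVec e f i i) (star (prodVec e f i i)) ⊗ₖ ρE) (ab, ε) (ab', ε')) := by
      simp [Matrix.kroneckerMap_apply, Matrix.sum_apply, Finset.sum_mul, mul_assoc]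
    rw [this, Finset.sum_mul, Finset.mul_sum]
    refine Finset.sum_congr rfl fun i _ => ?_
    ring
  rw [Finset.sum_congr rfl fun ab _ => Finset.sum_congr rfl fun ab' _ => hstep ab ab']
  have hswap : (∑ ab : Fin d × Fin d, ∑ ab' : Fin d × Fin d, ∑ i : Fin d, ((1 : ℂ) / d) *
      (star (prodVec e f k l ab) *
        ((Matrix.vecMulVec (prodVec e f i i) (star (prodVec e f i i)) ⊗ₖ ρE) (ab, ε) (ab', ε')
          * prodVec e f k l ab')))
      = ∑ i : Fin d, ((1 : ℂ) / d) * ∑ ab : Fin d × Fin d, ∑ ab' : Fin d × Fin d,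
          (star (prodVec e f k l ab) *
            ((Matrix.vecMulVec (prodVec e f i i) (star (prodVec e f i i)) ⊗ₖ ρE) (ab, ε) (ab', ε')
              * prodVec e f k l ab')) := by
    rw [Finset.sum_congr rfl fun ab _ => Finset.sum_comm, Finset.sum_comm]
    refine Finset.sum_congr rfl fun i _ => ?_
    rw [Finset.mul_sum]
    refine Finset.sum_congr rfl fun ab _ => ?_
    rw [Finset.mul_sum]
  rw [hswap]
  rw [Finset.sum_congr rfl fun i _ => by
    rw [sandwich_kron he hf i i k l ρE ε ε']]
  rcases eq_or_ne k l with rfl | hkl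
  · rw [Finset.sum_eq_single k]
    · simp
    · intro i _ hi
      simp [hi]
    · simp
  · rw [if_neg hkl]
    apply Finset.sum_eq_zero
    intro i _
    have : ¬(i = k ∧ i = l) := by
      rintro ⟨rfl, rfl⟩; exact hkl rfl
    simp [this]

end extract

section bridges
variable {d dA dB dE : ℕ} {e f : Fin d → (Fin d → ℂ)}
  {ψ : ((Fin d × Fin d) × (Fin dA × Fin dB)) × Fin dE → ℂ}

lemma ofM_eq (i j : Fin d) :
    (Matrix.of fun ε ε' : Fin dE =>
        ∑ s : Fin dA × Fin dB, measVec e f ψ i j s ε * star (measVec e f ψ i j s ε'))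
      = ((measM e f ψ i j)ᴴ * measM e f ψ i j).map star := by
  ext ε ε'
  rw [Matrix.of_apply, Matrix.map_apply, Matrix.mul_apply, star_sum]
  refine Finset.sum_congr rfl fun s _ => ?_
  rw [Matrix.conjTranspose_apply]
  show measVec e f ψ i j s ε * star (measVec e f ψ i j s ε')
    = star (star (measM e f ψ i j s ε) * measM e f ψ i j s ε')
  rw [star_mul', star_star]
  rfl

lemma psi_expand
    (he : ∀ i j, (∑ a, star (e i a) * e j a) = if i = j then (1 : ℂ) else 0)
    (hf : ∀ i j, (∑ a, star (f i a) * f j a) = if i = j then (1 : ℂ) else 0)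
    (ab : Fin d × Fin d) (s : Fin dA × Fin dB) (ε : Fin dE) :
    ψ ((ab, s), ε) = ∑ p : Fin d × Fin d, prodVec e f p.1 p.2 ab * measVec e f ψ p.1 p.2 s ε := by
  have h1 : ∀ p : Fin d × Fin d, prodVec e f p.1 p.2 ab * measVec e f ψ p.1 p.2 s ε
      = ∑ ab' : Fin d × Fin d,
          prodVec e f p.1 p.2 ab * star (prodVec e f p.1 p.2 ab') * ψ ((ab', s), ε) := by
    intro p
    rw [measVec, Finset.mul_sum]
    refine Finset.sum_congr rfl fun ab' _ => ?_
    ring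
  rw [Finset.sum_congr rfl fun p _ => h1 p, Finset.sum_comm]
  have h2 : ∀ ab' : Fin d × Fin d,
      (∑ p : Fin d × Fin d, prodVec e f p.1 p.2 ab * star (prodVec e f p.1 p.2 ab') * ψ ((ab', s), ε))
      = (if ab = ab' then (1 : ℂ) else 0) * ψ ((ab', s), ε) := by
    intro ab'
    rw [← Finset.sum_mul, prodVec_complete he hf]
  rw [Finset.sum_congr rfl fun ab' _ => h2 ab']
  rw [Finset.sum_eq_single ab]
  · simp
  · intro b _ hb
    simp [Ne.symm hb]
  · simp

lemma sandwich_block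
    (he : ∀ i j, (∑ a, star (e i a) * e j a) = if i = j then (1 : ℂ) else 0)
    (hf : ∀ i j, (∑ a, star (f i a) * f j a) = if i = j then (1 : ℂ) else 0)
    (i j k l i' j' : Fin d) (C : Matrix (Fin dA × Fin dB) (Fin dA × Fin dB) ℂ)
    (s s' : Fin dA × Fin dB) :
    (∑ ab : Fin d × Fin d, ∑ ab' : Fin d × Fin d, star (prodVec e f i j ab) *
        ((Matrix.vecMulVec (prodVec e f i' i') (star (prodVec e f j' j')) ⊗ₖ C) (ab, s) (ab', s'))
          * prodVec e f k l ab')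
      = (if i' = i ∧ i' = j then (1 : ℂ) else 0) *
          ((if j' = k ∧ j' = l then (1 : ℂ) else 0) * C s s') := by
  have h1 : ∀ ab ab' : Fin d × Fin d, star (prodVec e f i j ab) *
      ((Matrix.vecMulVec (prodVec e f i' i') (star (prodVec e f j' j')) ⊗ₖ C) (ab, s) (ab', s'))
        * prodVec e f k l ab'
      = (star (prodVec e f i j ab) * prodVec e f i' i' ab) *
          ((star (prodVec e f j' j' ab') * prodVec e f k l ab') * C s s') := by
    intro ab ab'
    rw [Matrix.kroneckerMap_apply, Matrix.vecMulVec_apply, Pi.star_apply]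
    ring
  rw [Finset.sum_congr rfl fun ab _ => Finset.sum_congr rfl fun ab' _ => h1 ab ab']
  rw [← Finset.sum_mul_sum, prodVec_on he hf i j i' i', ← Finset.sum_mul,
    prodVec_on he hf j' j' k l]
  congr 1
  refine if_congr ?_ rfl rfl
  constructor
  · rintro ⟨ra, rb⟩; exact ⟨ra.symm, rb.symm⟩
  · rintro ⟨ra, rb⟩; exact ⟨ra.symm, rb.symm⟩
end bridges

/-- a density matrix `ρ` on `ℂ^d⊗ℂ^d⊗ℂ^{d_{A'}}⊗ℂ^{d_{B'}}` has perfect key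
in the product basis `{|e_i f_j⟩}` (that is, every purification yields the ideal ccq state
`(Σ_i (1/d)|e_i f_i⟩⟨e_i f_i|) ⊗ ρ_E` after measuring `AB` in this basis and tracing out
`A'B'`) if and only if it is a private state
`ρ = (1/d) Σ_{i,j} |e_i f_i⟩⟨e_j f_j| ⊗ U_i σ U_j†`. -/
theorem has_key_iff_private_state {d dA dB : ℕ}
    (ρ : Matrix ((Fin d × Fin d) × (Fin dA × Fin dB)) ((Fin d × Fin d) × (Fin dA × Fin dB)) ℂ)
    (hρ : ρ.PosSemidef) (hρtr : ρ.trace = 1)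
    (e f : Fin d → (Fin d → ℂ))
    (he : ∀ i j, (∑ a, star (e i a) * e j a) = if i = j then (1 : ℂ) else 0)
    (hf : ∀ i j, (∑ a, star (f i a) * f j a) = if i = j then (1 : ℂ) else 0) :
    (∀ (dE : ℕ) (ψ : ((Fin d × Fin d) × (Fin dA × Fin dB)) × Fin dE → ℂ),
        (∑ x, ‖ψ x‖ ^ 2 = 1) →
        (∀ x y, (∑ ε : Fin dE, ψ (x, ε) * star (ψ (y, ε))) = ρ x y) →
        ∃ ρE : Matrix (Fin dE) (Fin dE) ℂ, ρE.PosSemidef ∧ ρE.trace = 1 ∧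
          ccqOf e f ψ =
            (∑ i : Fin d, ((1 : ℂ) / d) •
                Matrix.vecMulVec (prodVec e f i i) (star (prodVec e f i i))) ⊗ₖ ρE)
    ↔
    (∃ (σ : Matrix (Fin dA × Fin dB) (Fin dA × Fin dB) ℂ)
        (U : Fin d → Matrix (Fin dA × Fin dB) (Fin dA × Fin dB) ℂ),
        σ.PosSemidef ∧ σ.trace = 1 ∧
        (∀ i, U i ∈ Matrix.unitaryGroup (Fin dA × Fin dB) ℂ) ∧
        ρ = ∑ i : Fin d, ∑ j : Fin d, ((1 : ℂ) / d) •
              (Matrix.vecMulVec (prodVec e f i i) (star (prodVec e f j j)) ⊗ₖ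
                (U i * σ * (U j)ᴴ))) := by
  classical
  have hne : Nonempty ((Fin d × Fin d) × (Fin dA × Fin dB)) := by
    by_contra h
    rw [not_nonempty_iff] at h
    rw [Matrix.trace, Finset.univ_eq_empty, Finset.sum_empty] at hρtr
    exact one_ne_zero hρtr.symm
  obtain ⟨⟨⟨i0, j0⟩, s0⟩⟩ := hne
  have hdpos : 0 < d := i0.pos
  have hdne : (d : ℂ) ≠ 0 := Nat.cast_ne_zero.mpr hdpos.ne'
  have hdd : ((1 : ℂ) / d) * d = 1 := by field_simp
  constructor
  · intro hkey
    have hcard : Fintype.card ((Fin d × Fin d) × (Fin dA × Fin dB)) = d * d * (dA * dB) := by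
      simp [Fintype.card_prod]
    set κ : ((Fin d × Fin d) × (Fin dA × Fin dB)) ≃ Fin (d * d * (dA * dB)) :=
      Fintype.equivFinOfCardEq hcard with hκ
    obtain ⟨Q, hQH, hQQ⟩ := psd_sqrt_exists ρ hρ
    set ψ : ((Fin d × Fin d) × (Fin dA × Fin dB)) × Fin (d * d * (dA * dB)) → ℂ :=
      fun x => Q x.1 (κ.symm x.2) with hψ
    have hpur : ∀ x y, (∑ ε, ψ (x, ε) * star (ψ (y, ε))) = ρ x y := by
      intro x y
      have h1 : ∀ ε, ψ (x, ε) * star (ψ (y, ε)) = Q x (κ.symm ε) * Qᴴ (κ.symm ε) y := by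
        intro ε
        rw [Matrix.conjTranspose_apply]
      rw [Finset.sum_congr rfl fun ε _ => h1 ε]
      rw [show (∑ ε, Q x (κ.symm ε) * Qᴴ (κ.symm ε) y) = ∑ z, Q x z * Qᴴ z y from
        Equiv.sum_comp κ.symm (fun z => Q x z * Qᴴ z y)]
      rw [← Matrix.mul_apply, hQH, hQQ]
    have hnorm : (∑ x, ‖ψ x‖ ^ 2) = 1 := by
      have h3 : ∀ x, ((‖ψ x‖ ^ 2 : ℝ) : ℂ) = ψ x * star (ψ x) := by
        intro x
        rw [Complex.star_def, Complex.mul_conj, Complex.normSq_eq_norm_sq]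
      have h2 : ((∑ x, ‖ψ x‖ ^ 2 : ℝ) : ℂ) = 1 := by
        rw [Complex.ofReal_sum]
        rw [Finset.sum_congr rfl fun x _ => h3 x]
        rw [Fintype.sum_prod_type]
        rw [Finset.sum_congr rfl fun t _ => hpur t t]
        exact hρtr
      exact_mod_cast h2
    obtain ⟨ρE, hρEpsd, hρEtr, hccq⟩ := hkey _ ψ hnorm hpur
    have hext : ∀ k l ε ε', (∑ s : Fin dA × Fin dB,
        measVec e f ψ k l s ε * star (measVec e f ψ k l s ε'))
        = if k = l then ((1 : ℂ)/d) * ρE ε ε' else 0 := by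
      intro k l ε ε'
      have h1 := extract_ccq he hf ψ k l ε ε'
      rw [hccq] at h1
      rw [← h1]
      exact extract_ideal he hf ρE k l ε ε'
    have hXX : ∀ k l, (measM e f ψ k l)ᴴ * measM e f ψ k l
        = Matrix.of fun ε ε' : Fin (d * d * (dA * dB)) =>
            star (if k = l then ((1 : ℂ)/d) * ρE ε ε' else 0) := by
      intro k l
      ext ε ε'
      rw [Matrix.of_apply, ← hext k l ε ε', Matrix.mul_apply, star_sum]
      refine Finset.sum_congr rfl fun s _ => ?_
      rw [Matrix.conjTranspose_apply, star_mul', star_star]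
      rfl
    have hzero : ∀ k l, k ≠ l → measM e f ψ k l = 0 := by
      intro k l hkl
      apply Matrix.conjTranspose_mul_self_eq_zero.mp
      rw [hXX k l]
      ext ε ε'
      simp [hkl]
    have hXXd : ∀ k, (measM e f ψ k k)ᴴ * measM e f ψ k k
        = Matrix.of fun ε ε' : Fin (d * d * (dA * dB)) => star (((1 : ℂ)/d) * ρE ε ε') := by
      intro k
      rw [hXX k k]
      ext ε ε'
      rw [Matrix.of_apply, Matrix.of_apply, if_pos rfl]
    have hsame : ∀ k, (measM e f ψ k k)ᴴ * measM e f ψ k k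
        = (measM e f ψ i0 i0)ᴴ * measM e f ψ i0 i0 := by
      intro k
      rw [hXXd, hXXd]
    have hUex : ∀ i, ∃ Ui, Ui ∈ Matrix.unitaryGroup (Fin dA × Fin dB) ℂ ∧
        measM e f ψ i i = Ui * measM e f ψ i0 i0 :=
      fun i => exists_unitary_factor _ _ (hsame i)
    choose U hUmem hUeq using hUex
    set X0 := measM e f ψ i0 i0 with hX0
    set c : ℂ := ((Real.sqrt d : ℝ) : ℂ) with hc
    have hcc : c * star c = (d : ℂ) := by
      rw [hc, Complex.star_def, Complex.conj_ofReal, ← Complex.ofReal_mul,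
        Real.mul_self_sqrt (Nat.cast_nonneg d)]
      simp
    set σ := (c • X0) * (c • X0)ᴴ with hσdef
    have hσeq : σ = (d : ℂ) • (X0 * X0ᴴ) := by
      rw [hσdef, Matrix.conjTranspose_smul, Matrix.smul_mul, Matrix.mul_smul, smul_smul, hcc]
    refine ⟨σ, U, Matrix.posSemidef_self_mul_conjTranspose _, ?_, hUmem, ?_⟩
    · have htr0 : (X0ᴴ * X0).trace = 1/(d : ℂ) := by
        rw [hX0, hXXd i0, Matrix.trace]
        have hd1 : ∀ ε : Fin (d * d * (dA * dB)),
            (Matrix.of fun ε ε' : Fin (d * d * (dA * dB)) =>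
              star (((1 : ℂ)/d) * ρE ε ε')).diag ε
            = star (((1 : ℂ)/d) * ρE ε ε) := by
          intro ε
          rw [Matrix.diag_apply, Matrix.of_apply]
        rw [Finset.sum_congr rfl fun ε _ => hd1 ε]
        rw [show (∑ ε, star (((1 : ℂ)/d) * ρE ε ε))
            = star (∑ ε, ((1 : ℂ)/d) * ρE ε ε) from (star_sum _ _).symm]
        rw [← Finset.mul_sum]
        rw [show (∑ ε, ρE ε ε) = ρE.trace from rfl, hρEtr, mul_one]
        rw [star_div₀, star_one, star_natCast]
      rw [hσeq, Matrix.trace_smul, Matrix.trace_mul_comm, htr0, smul_eq_mul,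
        mul_one_div_cancel hdne]
    · have hUσU : ∀ i k, U i * σ * (U k)ᴴ
          = (d : ℂ) • (measM e f ψ i i * (measM e f ψ k k)ᴴ) := by
        intro i k
        rw [hσeq, Matrix.mul_smul, Matrix.smul_mul]
        congr 1
        rw [hUeq i, hUeq k, Matrix.conjTranspose_mul]
        simp only [Matrix.mul_assoc]
      ext ⟨ab, s⟩ ⟨ab', s'⟩
      have step2 : ∀ ε, ψ ((ab, s), ε) * star (ψ ((ab', s'), ε))
          = ∑ p : Fin d × Fin d, ∑ q : Fin d × Fin d,
              prodVec e f p.1 p.2 ab * measVec e f ψ p.1 p.2 s ε *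
                (star (prodVec e f q.1 q.2 ab') * star (measVec e f ψ q.1 q.2 s' ε)) := by
        intro ε
        rw [psi_expand (ψ := ψ) he hf ab s ε, psi_expand (ψ := ψ) he hf ab' s' ε, star_sum, Finset.sum_mul_sum]
        refine Finset.sum_congr rfl fun p _ => Finset.sum_congr rfl fun q _ => ?_
        rw [star_mul']
      have step3 : ρ (ab, s) (ab', s')
          = ∑ p : Fin d × Fin d, ∑ q : Fin d × Fin d,
              prodVec e f p.1 p.2 ab * star (prodVec e f q.1 q.2 ab') *
                (∑ ε, measVec e f ψ p.1 p.2 s ε * star (measVec e f ψ q.1 q.2 s' ε)) := by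
        rw [← hpur ((ab, s)) ((ab', s'))]
        rw [Finset.sum_congr rfl fun ε _ => step2 ε]
        rw [Finset.sum_comm]
        refine Finset.sum_congr rfl fun p _ => ?_
        rw [Finset.sum_comm]
        refine Finset.sum_congr rfl fun q _ => ?_
        rw [Finset.mul_sum]
        refine Finset.sum_congr rfl fun ε _ => ?_
        ring
      rw [step3]
      have hzvec : ∀ (k l : Fin d), k ≠ l → ∀ s ε, measVec e f ψ k l s ε = 0 := by
        intro k l hkl s ε
        exact congrFun (congrFun (hzero k l hkl) s) ε
      have step4 : (∑ p : Fin d × Fin d, ∑ q : Fin d × Fin d,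
            prodVec e f p.1 p.2 ab * star (prodVec e f q.1 q.2 ab') *
              (∑ ε, measVec e f ψ p.1 p.2 s ε * star (measVec e f ψ q.1 q.2 s' ε)))
          = ∑ i : Fin d, ∑ k : Fin d,
              prodVec e f i i ab * star (prodVec e f k k ab') *
                (∑ ε, measVec e f ψ i i s ε * star (measVec e f ψ k k s' ε)) := by
        rw [Fintype.sum_prod_type]
        refine Finset.sum_congr rfl fun i _ => ?_
        rw [Finset.sum_eq_single i]
        · rw [Fintype.sum_prod_type]
          refine Finset.sum_congr rfl fun k _ => ?_
          rw [Finset.sum_eq_single k]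
          · intro l _ hl
            have : ∀ ε, measVec e f ψ k l s' ε = 0 := fun ε => hzvec k l (Ne.symm hl) s' ε
            rw [Finset.sum_congr rfl fun ε _ => by rw [this ε, star_zero, mul_zero], Finset.sum_const_zero, mul_zero]
          · simp
        · intro j _ hj
          apply Finset.sum_eq_zero
          intro q _
          have : ∀ ε, measVec e f ψ i j s ε = 0 := fun ε => hzvec i j (Ne.symm hj) s ε
          rw [Finset.sum_congr rfl fun ε _ => by rw [this ε, zero_mul], Finset.sum_const_zero, mul_zero]
        · simp
      rw [step4]
      rw [Matrix.sum_apply]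
      refine Finset.sum_congr rfl fun i _ => ?_
      rw [Matrix.sum_apply]
      refine Finset.sum_congr rfl fun k _ => ?_
      rw [Matrix.smul_apply, Matrix.kroneckerMap_apply, Matrix.vecMulVec_apply, Pi.star_apply,
        smul_eq_mul]
      rw [hUσU i k, Matrix.smul_apply, smul_eq_mul]
      rw [show (measM e f ψ i i * (measM e f ψ k k)ᴴ) s s'
          = ∑ ε, measVec e f ψ i i s ε * star (measVec e f ψ k k s' ε) from ?_]
      · field_simp
      · rw [Matrix.mul_apply]
        refine Finset.sum_congr rfl fun ε _ => ?_
        rw [Matrix.conjTranspose_apply]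
        rfl
  · rintro ⟨σ, U, hσpsd, hσtr, hUmem, hρeq⟩ dE ψ hψnorm hpur
    have hU1 : ∀ i, (U i)ᴴ * U i = 1 := fun i => by
      have := Matrix.mem_unitaryGroup_iff'.mp (hUmem i)
      rwa [Matrix.star_eq_conjTranspose] at this
    have hU2 : ∀ i, U i * (U i)ᴴ = 1 := fun i => by
      have := Matrix.mem_unitaryGroup_iff.mp (hUmem i)
      rwa [Matrix.star_eq_conjTranspose] at this
    have hblock : ∀ i j k l, measM e f ψ i j * (measM e f ψ k l)ᴴ
        = if i = j ∧ k = l then ((1 : ℂ)/d) • (U i * σ * (U k)ᴴ) else 0 := by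
      intro i j k l
      rw [measM_gram hpur]
      ext s s'
      rw [Matrix.of_apply]
      have hent : ∀ ab ab' : Fin d × Fin d,
          star (prodVec e f i j ab) * ρ (ab, s) (ab', s') * prodVec e f k l ab'
          = ∑ i' : Fin d, ∑ j' : Fin d, ((1 : ℂ)/d) * (star (prodVec e f i j ab) *
              ((Matrix.vecMulVec (prodVec e f i' i') (star (prodVec e f j' j')) ⊗ₖ
                (U i' * σ * (U j')ᴴ)) (ab, s) (ab', s'))
                * prodVec e f k l ab') := by
        intro ab ab'
        rw [hρeq]
        simp only [Matrix.sum_apply, Matrix.smul_apply, smul_eq_mul]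
        rw [Finset.mul_sum, Finset.sum_mul]
        refine Finset.sum_congr rfl fun i' _ => ?_
        rw [Finset.mul_sum, Finset.sum_mul]
        refine Finset.sum_congr rfl fun j' _ => ?_
        ring
      rw [Finset.sum_congr rfl fun ab _ => Finset.sum_congr rfl fun ab' _ => hent ab ab']
      rw [sum_swap_4]
      have hsum : ∀ i' j' : Fin d, (∑ ab : Fin d × Fin d, ∑ ab' : Fin d × Fin d,
          ((1 : ℂ)/d) * (star (prodVec e f i j ab) *
            ((Matrix.vecMulVec (prodVec e f i' i') (star (prodVec e f j' j')) ⊗ₖ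
              (U i' * σ * (U j')ᴴ)) (ab, s) (ab', s'))
              * prodVec e f k l ab'))
          = ((1 : ℂ)/d) * ((if i' = i ∧ i' = j then (1:ℂ) else 0) *
              ((if j' = k ∧ j' = l then (1:ℂ) else 0) * (U i' * σ * (U j')ᴴ) s s')) := by
        intro i' j'
        rw [← sandwich_block he hf i j k l i' j' (U i' * σ * (U j')ᴴ) s s']
        rw [Finset.mul_sum]
        refine Finset.sum_congr rfl fun ab _ => ?_
        rw [Finset.mul_sum]
      rw [Finset.sum_congr rfl fun i' _ => Finset.sum_congr rfl fun j' _ => hsum i' j']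
      by_cases hij : i = j
      · by_cases hkl : k = l
        · subst hij; subst hkl
          rw [if_pos ⟨rfl, rfl⟩, Matrix.smul_apply, smul_eq_mul]
          rw [Finset.sum_eq_single i]
          · rw [Finset.sum_eq_single k]
            · simp
            · intro j' _ hj'
              simp [hj']
            · simp
          · intro i' _ hi'
            apply Finset.sum_eq_zero
            intro j' _
            simp [hi']
          · simp
        · rw [if_neg (by tauto), Matrix.zero_apply]
          apply Finset.sum_eq_zero
          intro i' _
          apply Finset.sum_eq_zero
          intro j' _
          have : ¬(j' = k ∧ j' = l) := by rintro ⟨rfl, rfl⟩; exact hkl rfl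
          simp [this]
      · rw [if_neg (by tauto), Matrix.zero_apply]
        apply Finset.sum_eq_zero
        intro i' _
        apply Finset.sum_eq_zero
        intro j' _
        have : ¬(i' = i ∧ i' = j) := by rintro ⟨rfl, rfl⟩; exact hij rfl
        simp [this]
    have hvec0 : ∀ i j, i ≠ j → measM e f ψ i j = 0 := by
      intro i j hij
      have h0 := hblock i j i j
      rw [if_neg (by tauto)] at h0
      exact Matrix.self_mul_conjTranspose_eq_zero.mp h0
    have hXii : ∀ i k, measM e f ψ i i * (measM e f ψ k k)ᴴ
        = ((1 : ℂ)/d) • (U i * σ * (U k)ᴴ) := by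
      intro i k
      rw [hblock i i k k, if_pos ⟨rfl, rfl⟩]
    have hYgram : ∀ i k, ((U i)ᴴ * measM e f ψ i i) * ((U k)ᴴ * measM e f ψ k k)ᴴ
        = ((1 : ℂ)/d) • σ := by
      intro i k
      rw [Matrix.conjTranspose_mul, Matrix.conjTranspose_conjTranspose]
      rw [Matrix.mul_assoc ((U i)ᴴ), ← Matrix.mul_assoc (measM e f ψ i i), hXii i k]
      rw [Matrix.smul_mul, Matrix.mul_smul]
      congr 1
      rw [Matrix.mul_assoc (U i * σ), hU1 k, Matrix.mul_one]
      rw [← Matrix.mul_assoc, hU1 i, Matrix.one_mul]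
    set Y := (U i0)ᴴ * measM e f ψ i0 i0 with hYdef
    have hYeq : ∀ i, (U i)ᴴ * measM e f ψ i i = Y := by
      intro i
      have h0 : ((U i)ᴴ * measM e f ψ i i - Y) * ((U i)ᴴ * measM e f ψ i i - Y)ᴴ = 0 := by
        rw [Matrix.conjTranspose_sub, Matrix.sub_mul, Matrix.mul_sub, Matrix.mul_sub]
        rw [hYgram i i, hYdef, hYgram i i0, hYgram i0 i, hYgram i0 i0]
        simp
      have := Matrix.self_mul_conjTranspose_eq_zero.mp h0
      exact sub_eq_zero.mp this
    have hXeq : ∀ i, measM e f ψ i i = U i * Y := by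
      intro i
      rw [← hYeq i, ← Matrix.mul_assoc, hU2 i, Matrix.one_mul]
    have hYY : Y * Yᴴ = ((1 : ℂ)/d) • σ := by
      rw [hYdef]; exact hYgram i0 i0
    set c : ℂ := ((Real.sqrt d : ℝ) : ℂ) with hc
    have hcc : star c * c = (d : ℂ) := by
      rw [hc, Complex.star_def, Complex.conj_ofReal, ← Complex.ofReal_mul,
        Real.mul_self_sqrt (Nat.cast_nonneg d)]
      simp
    set Z := c • Y with hZ
    set ρE := (Zᴴ * Z)ᵀ with hρEdef
    have hρEeq : ρE = (d : ℂ) • ((Yᴴ * Y)ᵀ) := by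
      rw [hρEdef, hZ, Matrix.conjTranspose_smul, Matrix.smul_mul, Matrix.mul_smul,
        smul_smul, hcc, Matrix.transpose_smul]
    have hherm : (Yᴴ * Y)ᵀ = (Yᴴ * Y).map star := by
      ext ε ε'
      rw [Matrix.transpose_apply, Matrix.map_apply]
      have hh : (Yᴴ * Y)ᴴ = Yᴴ * Y := (Matrix.posSemidef_conjTranspose_mul_self Y).isHermitian
      have h2 : star ((Yᴴ * Y) ε ε') = (Yᴴ * Y)ᴴ ε' ε := (Matrix.conjTranspose_apply _ _ _).symm
      rw [h2, hh]
    refine ⟨ρE, ?_, ?_, ?_⟩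
    · rw [hρEdef]
      exact (Matrix.posSemidef_conjTranspose_mul_self Z).transpose
    · rw [hρEdef, Matrix.trace_transpose, Matrix.trace_mul_comm, hZ,
        Matrix.conjTranspose_smul, Matrix.smul_mul, Matrix.mul_smul, smul_smul]
      rw [mul_comm c (star c), hcc, hYY, smul_smul]
      rw [mul_comm (d:ℂ), hdd, one_smul, hσtr]
    · have hMfull : ∀ i j, (Matrix.of fun ε ε' : Fin dE =>
          ∑ s : Fin dA × Fin dB, measVec e f ψ i j s ε * star (measVec e f ψ i j s ε'))
          = if i = j then ((1 : ℂ)/d) • ρE else 0 := by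
        intro i j
        rcases eq_or_ne i j with rfl | hij
        · rw [if_pos rfl, ofM_eq, hXeq i, Matrix.conjTranspose_mul]
          rw [Matrix.mul_assoc, ← Matrix.mul_assoc ((U i)ᴴ), hU1 i, Matrix.one_mul]
          rw [show (Yᴴ * Y).map star = (Yᴴ * Y)ᵀ from hherm.symm, hρEeq, smul_smul, hdd, one_smul]
        · rw [if_neg hij]
          ext ε ε'
          rw [Matrix.of_apply, Matrix.zero_apply]
          apply Finset.sum_eq_zero
          intro s _
          have h3 : measVec e f ψ i j s ε = 0 := by
            have := congrFun (congrFun (hvec0 i j hij) s) ε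
            exact this
          rw [h3, zero_mul]
      ext ⟨ab, ε⟩ ⟨ab', ε'⟩
      rw [ccqOf]
      simp only [Matrix.sum_apply]
      rw [Finset.sum_congr rfl fun i _ => Finset.sum_congr rfl fun j _ => by rw [hMfull i j]]
      have hterm : ∀ i j : Fin d,
          (Matrix.vecMulVec (prodVec e f i j) (star (prodVec e f i j)) ⊗ₖ
            (if i = j then ((1 : ℂ)/d) • ρE else 0)) (ab, ε) (ab', ε')
          = if i = j then prodVec e f i i ab * star (prodVec e f i i ab') *
              (((1 : ℂ)/d) * ρE ε ε') else 0 := by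
        intro i j
        rcases eq_or_ne i j with rfl | hij
        · rw [if_pos rfl, if_pos rfl, Matrix.kroneckerMap_apply, Matrix.vecMulVec_apply,
            Pi.star_apply, Matrix.smul_apply, smul_eq_mul]
          try ring
        · rw [if_neg hij, if_neg hij, Matrix.kroneckerMap_apply, Matrix.zero_apply, mul_zero]
      rw [Finset.sum_congr rfl fun i _ => Finset.sum_congr rfl fun j _ => hterm i j]
      have hcollapse : ∀ i : Fin d, (∑ j : Fin d, if i = j then prodVec e f i i ab *
          star (prodVec e f i i ab') * (((1 : ℂ)/d) * ρE ε ε') else 0)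
          = prodVec e f i i ab * star (prodVec e f i i ab') * (((1 : ℂ)/d) * ρE ε ε') := by
        intro i
        rw [Finset.sum_ite_eq]
        simp
      rw [Finset.sum_congr rfl fun i _ => hcollapse i]
      rw [Matrix.kroneckerMap_apply, Matrix.sum_apply, Finset.sum_mul]
      refine Finset.sum_congr rfl fun i _ => ?_
      rw [Matrix.smul_apply, Matrix.vecMulVec_apply, Pi.star_apply, smul_eq_mul]
      ring
end

section
/- Let d ≥ 2, k ≥ 1, and let ρ_s = (2/(d²+d))P_sym, ρ_a = (2/(d²−d))P_asym be the symmetric and antisymmetric Werner states on ℂ^{d}⊗ℂ^{d}. Set τ₁ = ((ρ_s+ρ_a)/2)^{⊗k} and τ₂ = ρ_s^{⊗k}, and for 0 < p ≤ 1/2 define the density matrix ρ_{(p,d,k)} on ℂ²⊗ℂ²⊗(ℂ^{d}⊗ℂ^{d})^{⊗k} (factors A,B,A',B' appropriately arranged) by the block form: the |00⟩⟨00| and |11⟩⟨11| blocks equal p(τ₁+τ₂)/2, the |00⟩⟨11| and |11⟩⟨00| blocks equal p(τ₁−τ₂)/2, the |01⟩⟨01| and |10⟩⟨10| blocks equal (1/2−p)τ₂,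 and all other blocks are zero. Then ρ_{(p,d,k)} has positive semidefinite partial transpose with respect to all of Bob's subsystems (B together with the B' factors) if and only if 0 < p ≤ 1/3 and (1−p)/p ≥ (d/(d−1))^k. In particular, for every p ∈ (0,1/3] and every k there exists d such that ρ_{(p,d,k)} is PPT. -/
open Matrix Kronecker BigOperators
set_option linter.unusedSectionVars false
open scoped ComplexOrder Classical

/-- The swap operator `V = Σ_{i,j}|ij⟩⟨ji|` on `ℂ^d ⊗ ℂ^d`. -/
def swapOp (d : ℕ) : Matrix (Fin d × Fin d) (Fin d × Fin d) ℂ :=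
  Matrix.of fun x y => if x.1 = y.2 ∧ x.2 = y.1 then 1 else 0

/-- The symmetric Werner state `ρ_s = (2/(d²+d)) P_sym` with `P_sym = (I+V)/2`. -/
noncomputable def wernerSym (d : ℕ) : Matrix (Fin d × Fin d) (Fin d × Fin d) ℂ :=
  ((2 / ((d : ℝ) ^ 2 + d) : ℝ) : ℂ) •
    (((1 : ℂ) / 2) • ((1 : Matrix (Fin d × Fin d) (Fin d × Fin d) ℂ) + swapOp d))

/-- The antisymmetric Werner state `ρ_a = (2/(d²−d)) P_asym` with `P_asym = (I−V)/2`. -/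
noncomputable def wernerAsym (d : ℕ) : Matrix (Fin d × Fin d) (Fin d × Fin d) ℂ :=
  ((2 / ((d : ℝ) ^ 2 - d) : ℝ) : ℂ) •
    (((1 : ℂ) / 2) • ((1 : Matrix (Fin d × Fin d) (Fin d × Fin d) ℂ) - swapOp d))

/-- `k`-fold tensor (Kronecker) power of a matrix. -/
def kpow {ι : Type*} (M : Matrix ι ι ℂ) (k : ℕ) :
    Matrix (Fin k → ι) (Fin k → ι) ℂ :=
  Matrix.of fun x y => ∏ t, M (x t) (y t)

/-- The hiding state `τ₁ = ((ρ_s+ρ_a)/2)^{⊗k}`. -/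
noncomputable def tau₁ (d k : ℕ) :
    Matrix (Fin k → Fin d × Fin d) (Fin k → Fin d × Fin d) ℂ :=
  kpow (((1 : ℂ) / 2) • (wernerSym d + wernerAsym d)) k

/-- The hiding state `τ₂ = ρ_s^{⊗k}`. -/
noncomputable def tau₂ (d k : ℕ) :
    Matrix (Fin k → Fin d × Fin d) (Fin k → Fin d × Fin d) ℂ :=
  kpow (wernerSym d) k

/-- The family of states `ρ_{(p,d,k)}` on `ℂ²⊗ℂ²⊗(ℂ^d⊗ℂ^d)^{⊗k}`: the `|00⟩⟨00|` and
`|11⟩⟨11|` blocks are `p(τ₁+τ₂)/2`, the `|00⟩⟨11|` and `|11⟩⟨00|` blocks are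
`p(τ₁−τ₂)/2`, the `|01⟩⟨01|` and `|10⟩⟨10|` blocks are `(1/2−p)τ₂`, all others zero. -/
noncomputable def rhoPDK (d k : ℕ) (p : ℝ) :
    Matrix ((Fin 2 × Fin 2) × (Fin k → Fin d × Fin d))
      ((Fin 2 × Fin 2) × (Fin k → Fin d × Fin d)) ℂ :=
  Matrix.single ((0 : Fin 2), (0 : Fin 2)) ((0 : Fin 2), (0 : Fin 2)) (1 : ℂ) ⊗ₖ
      (((p / 2 : ℝ) : ℂ) • (tau₁ d k + tau₂ d k)) +
    Matrix.single ((0 : Fin 2), (0 : Fin 2)) ((1 : Fin 2), (1 : Fin 2)) (1 : ℂ) ⊗ₖ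
      (((p / 2 : ℝ) : ℂ) • (tau₁ d k - tau₂ d k)) +
    Matrix.single ((1 : Fin 2), (1 : Fin 2)) ((0 : Fin 2), (0 : Fin 2)) (1 : ℂ) ⊗ₖ
      (((p / 2 : ℝ) : ℂ) • (tau₁ d k - tau₂ d k)) +
    Matrix.single ((1 : Fin 2), (1 : Fin 2)) ((1 : Fin 2), (1 : Fin 2)) (1 : ℂ) ⊗ₖ
      (((p / 2 : ℝ) : ℂ) • (tau₁ d k + tau₂ d k)) +
    Matrix.single ((0 : Fin 2), (1 : Fin 2)) ((0 : Fin 2), (1 : Fin 2)) (1 : ℂ) ⊗ₖ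
      (((1 / 2 - p : ℝ) : ℂ) • tau₂ d k) +
    Matrix.single ((1 : Fin 2), (0 : Fin 2)) ((1 : Fin 2), (0 : Fin 2)) (1 : ℂ) ⊗ₖ
      (((1 / 2 - p : ℝ) : ℂ) • tau₂ d k)

/-- Partial transpose over all of Bob's subsystems: the `B` qubit together with the
second halves of the `k` pairs `ℂ^d⊗ℂ^d`. -/
def ptBob {d k : ℕ}
    (M : Matrix ((Fin 2 × Fin 2) × (Fin k → Fin d × Fin d))
      ((Fin 2 × Fin 2) × (Fin k → Fin d × Fin d)) ℂ) :
    Matrix ((Fin 2 × Fin 2) × (Fin k → Fin d × Fin d))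
      ((Fin 2 × Fin 2) × (Fin k → Fin d × Fin d)) ℂ :=
  Matrix.of fun x y =>
    M ((x.1.1, y.1.2), fun t => ((x.2 t).1, (y.2 t).2))
      ((y.1.1, x.1.2), fun t => ((y.2 t).1, (x.2 t).2))

/-! ### Auxiliary general lemmas -/

section General

variable {n m : Type*} [Fintype n] [Fintype m] [DecidableEq n] [DecidableEq m]

lemma psd_real_smul {M : Matrix n n ℂ} (hM : M.PosSemidef) {c : ℝ} (hc : 0 ≤ c) :
    (((c : ℝ) : ℂ) • M).PosSemidef := by
  rw [Matrix.posSemidef_iff_dotProduct_mulVec]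
  constructor
  · have : ((c : ℝ) : ℂ) • M = ((c : ℝ) : ℂ) • Mᴴ := by rw [hM.1.eq]
    rw [Matrix.IsHermitian, Matrix.conjTranspose_smul, hM.1.eq, Complex.star_def,
      Complex.conj_ofReal]
  · intro x
    rw [Matrix.smul_mulVec, dotProduct_smul, smul_eq_mul]
    exact mul_nonneg (Complex.zero_le_real.2 hc) (hM.dotProduct_mulVec_nonneg x)

lemma conjT_kron (A : Matrix n n ℂ) (B : Matrix m m ℂ) : (A ⊗ₖ B)ᴴ = Aᴴ ⊗ₖ Bᴴ := by
  ext x y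
  simp [Matrix.conjTranspose_apply, Matrix.kroneckerMap_apply, star_mul', mul_comm]

lemma psd_iff_eq_ct_mul_self {A : Matrix n n ℂ} :
    A.PosSemidef ↔ ∃ B : Matrix n n ℂ, A = Bᴴ * B := by
  constructor
  · intro hA
    open scoped MatrixOrder in
    exact CStarAlgebra.nonneg_iff_eq_star_mul_self.mp hA.nonneg
  · rintro ⟨B, rfl⟩
    exact Matrix.posSemidef_conjTranspose_mul_self B

lemma kron_psd {A : Matrix n n ℂ} {B : Matrix m m ℂ}
    (hA : A.PosSemidef) (hB : B.PosSemidef) : (A ⊗ₖ B).PosSemidef := by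
  obtain ⟨C, rfl⟩ := psd_iff_eq_ct_mul_self.mp hA
  obtain ⟨D, rfl⟩ := psd_iff_eq_ct_mul_self.mp hB
  rw [Matrix.mul_kronecker_mul, ← conjT_kron]
  exact Matrix.posSemidef_conjTranspose_mul_self _

lemma kpow_zero (M : Matrix n n ℂ) : kpow M 0 = 1 := by
  ext f g
  rw [Subsingleton.elim f g]
  simp [kpow, Matrix.one_apply]

lemma kpow_succ (M : Matrix n n ℂ) (k : ℕ) :
    kpow M (k + 1) = (M ⊗ₖ kpow M k).submatrix
      (fun f : Fin (k+1) → n => (f 0, Fin.tail f))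
      (fun f : Fin (k+1) → n => (f 0, Fin.tail f)) := by
  ext f g
  simp [kpow, Matrix.submatrix_apply, Matrix.kroneckerMap_apply, Fin.prod_univ_succ, Fin.tail]

lemma kpow_psd {M : Matrix n n ℂ} (hM : M.PosSemidef) (k : ℕ) : (kpow M k).PosSemidef := by
  induction k with
  | zero => rw [kpow_zero]; exact Matrix.PosSemidef.one
  | succ j ih => rw [kpow_succ]; exact (kron_psd hM ih).submatrix _

lemma kpow_sub_psd {A B : Matrix n n ℂ} (hA : A.PosSemidef) (hBA : (B - A).PosSemidef)
    (k : ℕ) : (kpow B k - kpow A k).PosSemidef := by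
  have hB : B.PosSemidef := by simpa using hBA.add hA
  induction k with
  | zero => simp only [kpow_zero, sub_self]; exact Matrix.PosSemidef.zero
  | succ j ih =>
    have heq : kpow B (j+1) - kpow A (j+1) =
        ((B - A) ⊗ₖ kpow B j + A ⊗ₖ (kpow B j - kpow A j)).submatrix
          (fun f : Fin (j+1) → n => (f 0, Fin.tail f))
          (fun f : Fin (j+1) → n => (f 0, Fin.tail f)) := by
      rw [kpow_succ, kpow_succ]
      ext f g
      simp only [Matrix.sub_apply, Matrix.add_apply, Matrix.submatrix_apply,
        Matrix.kroneckerMap_apply]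
      ring
    rw [heq]
    exact ((kron_psd hBA (kpow_psd hB j)).add (kron_psd hA ih)).submatrix _

lemma kpow_smul (c : ℂ) (M : Matrix n n ℂ) (k : ℕ) :
    kpow (c • M) k = c ^ k • kpow M k := by
  ext f g
  simp [kpow, Matrix.smul_apply, smul_eq_mul, Finset.prod_mul_distrib]

lemma kpow_mulVec (M : Matrix n n ℂ) (u : n → ℂ) (μ : ℂ)
    (h : M.mulVec u = μ • u) (k : ℕ) :
    (kpow M k).mulVec (fun f : Fin k → n => ∏ t, u (f t)) =
      (μ ^ k) • (fun f : Fin k → n => ∏ t, u (f t)) := by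
  have hrow : ∀ i, ∑ j, M i j * u j = μ * u i := by
    intro i
    have := congrFun h i
    simpa [Matrix.mulVec, dotProduct] using this
  funext f
  simp only [Matrix.mulVec, dotProduct, kpow, Matrix.of_apply, Pi.smul_apply,
    smul_eq_mul]
  have h1 : ∀ g : Fin k → n, (∏ t, M (f t) (g t)) * ∏ t, u (g t)
      = ∏ t, (M (f t) (g t) * u (g t)) := fun g => (Finset.prod_mul_distrib).symm
  simp_rw [h1]
  rw [← Fintype.prod_sum (fun t j => M (f t) j * u j)]
  simp_rw [hrow]
  rw [Finset.prod_mul_distrib, Finset.prod_const]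
  simp

lemma prodvec_dot (u : n → ℂ) (k : ℕ) :
    star (fun f : Fin k → n => ∏ t, u (f t)) ⬝ᵥ (fun f : Fin k → n => ∏ t, u (f t)) =
      (star u ⬝ᵥ u) ^ k := by
  simp only [dotProduct, Pi.star_apply, star_prod]
  have h1 : ∀ g : Fin k → n, (∏ t, star (u (g t))) * ∏ t, u (g t)
      = ∏ t, (star (u (g t)) * u (g t)) := fun g => (Finset.prod_mul_distrib).symm
  simp_rw [h1]
  rw [← Fintype.prod_sum (fun t j => star (u j) * u j)]
  rw [Finset.prod_const]
  simp

lemma kron_mulVec (S : Matrix n n ℂ) (X : Matrix m m ℂ) (v : n → ℂ) (x : m → ℂ) :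
    (S ⊗ₖ X).mulVec (fun q : n × m => v q.1 * x q.2) =
      fun q : n × m => (S.mulVec v q.1) * (X.mulVec x q.2) := by
  funext q
  obtain ⟨a, f⟩ := q
  simp only [Matrix.mulVec, dotProduct, Matrix.kroneckerMap_apply,
    Fintype.sum_prod_type]
  rw [Finset.sum_mul_sum]
  exact Finset.sum_congr rfl fun b _ => Finset.sum_congr rfl fun g _ => by ring

lemma dot_kron (S : Matrix n n ℂ) (X : Matrix m m ℂ) (v : n → ℂ) (x : m → ℂ) :
    star (fun q : n × m => v q.1 * x q.2) ⬝ᵥ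
        (S ⊗ₖ X).mulVec (fun q : n × m => v q.1 * x q.2) =
      (star v ⬝ᵥ S.mulVec v) * (star x ⬝ᵥ X.mulVec x) := by
  rw [kron_mulVec]
  simp only [dotProduct, Pi.star_apply, star_mul', Fintype.sum_prod_type]
  rw [Finset.sum_mul_sum]
  exact Finset.sum_congr rfl fun a _ => Finset.sum_congr rfl fun f _ => by ring

lemma stdBasis_diag_psd (z : n) : (Matrix.single z z (1 : ℂ)).PosSemidef := by
  rw [Matrix.posSemidef_iff_dotProduct_mulVec]
  constructor
  · ext i j
    simp only [Matrix.conjTranspose_apply, Matrix.single, Matrix.of_apply]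
    by_cases h1 : z = i <;> by_cases h2 : z = j <;> simp [h1, h2]
  · intro x
    have hmv : (Matrix.single z z (1 : ℂ)).mulVec x =
        fun i => if z = i then x z else 0 := by
      funext i
      simp only [Matrix.mulVec, dotProduct, Matrix.single, Matrix.of_apply]
      by_cases h1 : z = i
      · subst h1
        simp [ite_mul, Finset.sum_ite_eq]
      · simp [h1]
    rw [hmv]
    simp only [dotProduct, Pi.star_apply, mul_ite, mul_zero]
    rw [Finset.sum_ite_eq Finset.univ z fun i => star (x i) * x z]
    simp only [Finset.mem_univ, if_true]
    exact star_mul_self_nonneg _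

end General

/-! ### The partially transposed Werner building blocks -/

def Emat (d : ℕ) : Matrix (Fin d × Fin d) (Fin d × Fin d) ℂ :=
  Matrix.of fun x y => if x.1 = x.2 ∧ y.1 = y.2 then 1 else 0

noncomputable def A1 (d : ℕ) : Matrix (Fin d × Fin d) (Fin d × Fin d) ℂ :=
  ((1 / ((d : ℝ) ^ 2 - 1) : ℝ) : ℂ) •
    ((1 : Matrix (Fin d × Fin d) (Fin d × Fin d) ℂ) - ((1 / (d : ℝ) : ℝ) : ℂ) • Emat d)

noncomputable def A2 (d : ℕ) : Matrix (Fin d × Fin d) (Fin d × Fin d) ℂ :=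
  ((1 / ((d : ℝ) ^ 2 + d) : ℝ) : ℂ) •
    ((1 : Matrix (Fin d × Fin d) (Fin d × Fin d) ℂ) + Emat d)

section Blocks

variable {d : ℕ}

lemma diag_count (d : ℕ) :
    (∑ z : Fin d × Fin d, if z.1 = z.2 then (1 : ℂ) else 0) = (d : ℂ) := by
  rw [Fintype.sum_prod_type]
  simp [Finset.sum_ite_eq]

lemma Emat_herm (d : ℕ) : (Emat d)ᴴ = Emat d := by
  ext x y
  simp only [Matrix.conjTranspose_apply, Emat, Matrix.of_apply]
  by_cases h1 : x.1 = x.2 <;> by_cases h2 : y.1 = y.2 <;> simp [h1, h2]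

lemma Emat_sq (d : ℕ) : Emat d * Emat d = (d : ℂ) • Emat d := by
  ext x y
  simp only [Matrix.mul_apply, Emat, Matrix.of_apply, Matrix.smul_apply, smul_eq_mul]
  rw [Finset.sum_congr rfl (fun z _ => show
      (if x.1 = x.2 ∧ z.1 = z.2 then (1:ℂ) else 0) *
        (if z.1 = z.2 ∧ y.1 = y.2 then 1 else 0)
      = if x.1 = x.2 ∧ y.1 = y.2 then (if z.1 = z.2 then (1:ℂ) else 0) else 0 by
    by_cases h1 : x.1 = x.2 <;> by_cases h2 : z.1 = z.2 <;> by_cases h3 : y.1 = y.2 <;>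
      simp [h1, h2, h3])]
  by_cases h : x.1 = x.2 ∧ y.1 = y.2 <;> simp [h, diag_count d]

lemma Emat_psd (hd : 0 < d) : (Emat d).PosSemidef := by
  rw [psd_iff_eq_ct_mul_self]
  refine ⟨Matrix.of fun x y : Fin d × Fin d =>
    if x = (⟨0, hd⟩, ⟨0, hd⟩) ∧ y.1 = y.2 then 1 else 0, ?_⟩
  ext x y
  simp only [Matrix.mul_apply, Matrix.conjTranspose_apply, Matrix.of_apply, Emat]
  rw [Finset.sum_congr rfl (fun z _ => show
      star (if z = (⟨0, hd⟩, ⟨0, hd⟩) ∧ x.1 = x.2 then (1:ℂ) else 0) *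
        (if z = (⟨0, hd⟩, ⟨0, hd⟩) ∧ y.1 = y.2 then 1 else 0)
      = if z = (⟨0, hd⟩, ⟨0, hd⟩) then (if x.1 = x.2 ∧ y.1 = y.2 then 1 else 0) else 0 by
    by_cases h1 : z = (⟨0, hd⟩, ⟨0, hd⟩) <;>
      by_cases h2 : x.1 = x.2 <;> by_cases h3 : y.1 = y.2 <;> simp [h1, h2, h3])]
  rw [Finset.sum_ite_eq' Finset.univ]
  simp

lemma Emat_mulVec_u (d : ℕ) :
    (Emat d).mulVec (fun z : Fin d × Fin d => if z.1 = z.2 then (1:ℂ) else 0) =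
      (d : ℂ) • (fun z : Fin d × Fin d => if z.1 = z.2 then (1:ℂ) else 0) := by
  funext z
  simp only [Matrix.mulVec, dotProduct, Emat, Matrix.of_apply, Pi.smul_apply,
    smul_eq_mul]
  by_cases h : z.1 = z.2
  · simp only [h, true_and, if_true, ite_mul, one_mul, zero_mul, mul_one]
    rw [Finset.sum_congr rfl (fun y _ => show
        (if y.1 = y.2 then (if y.1 = y.2 then (1:ℂ) else 0) else 0)
          = if y.1 = y.2 then (1:ℂ) else 0 by split_ifs <;> simp_all)]
    exact diag_count d
  · simp [h]

lemma Emat_mulVec_w0 (a b : Fin d) (hab : a ≠ b) :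
    (Emat d).mulVec (fun z : Fin d × Fin d => if z = (a, b) then (1:ℂ) else 0) = 0 := by
  funext z
  simp only [Matrix.mulVec, dotProduct, Emat, Matrix.of_apply, mul_ite, mul_one,
    mul_zero, Pi.zero_apply]
  rw [Finset.sum_congr rfl (fun y _ => show
      (if y = (a, b) then (if z.1 = z.2 ∧ y.1 = y.2 then (1:ℂ) else 0) else 0) = 0 by
    by_cases h : y = (a, b)
    · subst h; simp [hab]
    · simp [h])]
  simp

end Blocks

section Blocks2

variable {d : ℕ}

lemma cast_facts (hd : 2 ≤ d) :
    ((d:ℝ) ≠ 0 ∧ (d:ℝ) - 1 ≠ 0 ∧ (d:ℝ)^2 - 1 ≠ 0 ∧ (d:ℝ)^2 + d ≠ 0) ∧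
    ((d:ℂ) ≠ 0 ∧ (d:ℂ) - 1 ≠ 0 ∧ (d:ℂ)^2 - 1 ≠ 0 ∧ (d:ℂ)^2 + d ≠ 0) := by
  have hdR : (2:ℝ) ≤ (d:ℝ) := by exact_mod_cast hd
  have h1 : (d:ℝ) ≠ 0 := by nlinarith
  have h2 : (d:ℝ) - 1 ≠ 0 := by nlinarith
  have h3 : (d:ℝ)^2 - 1 ≠ 0 := by nlinarith
  have h4 : (d:ℝ)^2 + d ≠ 0 := by nlinarith
  refine ⟨⟨h1, h2, h3, h4⟩, ?_, ?_, ?_, ?_⟩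
  · exact_mod_cast h1
  · intro h; apply h2
    have h' : (((d:ℝ) - 1 : ℝ) : ℂ) = (d:ℂ) - 1 := by push_cast; ring
    rw [← h'] at h; exact_mod_cast h
  · intro h; apply h3
    have h' : (((d:ℝ)^2 - 1 : ℝ) : ℂ) = (d:ℂ)^2 - 1 := by push_cast; ring
    rw [← h'] at h; exact_mod_cast h
  · intro h; apply h4
    have h' : (((d:ℝ)^2 + d : ℝ) : ℂ) = (d:ℂ)^2 + d := by push_cast; ring
    rw [← h'] at h; exact_mod_cast h

lemma Qr_psd (hd : 2 ≤ d) :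
    ((1 : Matrix (Fin d × Fin d) (Fin d × Fin d) ℂ)
      - ((1 / (d:ℝ) : ℝ) : ℂ) • Emat d).PosSemidef := by
  obtain ⟨_, hC0, -, -, -⟩ := cast_facts hd
  set c : ℂ := ((1 / (d:ℝ) : ℝ) : ℂ) with hc
  have hcd : c * c * (d:ℂ) = c := by
    rw [hc, show ((1 / (d:ℝ) : ℝ) : ℂ) = 1 / (d:ℂ) by push_cast; ring]
    field_simp
  rw [psd_iff_eq_ct_mul_self]
  refine ⟨1 - c • Emat d, ?_⟩
  have hherm : (1 - c • Emat d)ᴴ = 1 - c • Emat d := by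
    rw [Matrix.conjTranspose_sub, Matrix.conjTranspose_one, Matrix.conjTranspose_smul,
      Emat_herm, hc, Complex.star_def, Complex.conj_ofReal]
  rw [hherm, sub_mul, one_mul, mul_sub, mul_one, smul_mul_assoc, mul_smul_comm,
    Emat_sq, smul_smul, smul_smul, hcd]
  abel

lemma A1_psd (hd : 2 ≤ d) : (A1 d).PosSemidef := by
  have hdR : (2:ℝ) ≤ (d:ℝ) := by exact_mod_cast hd
  have h1 : (0:ℝ) < (d:ℝ)^2 - 1 := by nlinarith
  exact psd_real_smul (Qr_psd hd) (by positivity)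

lemma A2_psd (hd : 2 ≤ d) : (A2 d).PosSemidef := by
  have hdR : (2:ℝ) ≤ (d:ℝ) := by exact_mod_cast hd
  exact psd_real_smul (Matrix.PosSemidef.one.add (Emat_psd (by omega)))
    (by positivity)

lemma gap_eq (hd : 2 ≤ d) :
    ((((d:ℝ) / ((d:ℝ) - 1) : ℝ)) : ℂ) • A2 d - A1 d =
      ((1 / ((d:ℝ)^2 - 1) * (1 + 1 / (d:ℝ)) : ℝ) : ℂ) • Emat d := by
  obtain ⟨⟨hR0, hR1, hR2, hR3⟩, hC0, hC1, hC2, hC3⟩ := cast_facts hd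
  ext x y
  simp only [A1, A2, Matrix.smul_apply, Matrix.sub_apply, Matrix.add_apply,
    Matrix.one_apply, Emat, Matrix.of_apply, smul_eq_mul]
  rcases eq_or_ne x y with h1 | h1
  · subst h1
    by_cases hx : x.1 = x.2 <;> simp only [hx, if_true, if_false, and_self, if_pos rfl] <;>
      push_cast <;> field_simp <;> ring
  · by_cases hx : x.1 = x.2 <;> by_cases hy : y.1 = y.2 <;>
      simp only [h1, hx, hy, if_false, if_true, and_self, true_and, false_and,
        if_neg h1, and_false] <;> push_cast <;> field_simp <;> ring

lemma gap_psd (hd : 2 ≤ d) :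
    (((((d:ℝ) / ((d:ℝ) - 1) : ℝ)) : ℂ) • A2 d - A1 d).PosSemidef := by
  obtain ⟨⟨hR0, hR1, hR2, hR3⟩, -⟩ := cast_facts hd
  have hdR : (2:ℝ) ≤ (d:ℝ) := by exact_mod_cast hd
  rw [gap_eq hd]
  refine psd_real_smul (Emat_psd (by omega)) ?_
  have h1 : 0 < (d:ℝ)^2 - 1 := by nlinarith
  have h2 : (0:ℝ) < 1 + 1 / (d:ℝ) := by positivity
  positivity

lemma A1_mulVec_u (hd : 2 ≤ d) :
    (A1 d).mulVec (fun z : Fin d × Fin d => if z.1 = z.2 then (1:ℂ) else 0) =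
      ((0 : ℝ) : ℂ) • (fun z : Fin d × Fin d => if z.1 = z.2 then (1:ℂ) else 0) := by
  obtain ⟨⟨hR0, -, -, -⟩, hC0, -, -, -⟩ := cast_facts hd
  rw [A1, Matrix.smul_mulVec, Matrix.sub_mulVec, Matrix.smul_mulVec,
    Matrix.one_mulVec, Emat_mulVec_u]
  funext z
  simp only [Pi.smul_apply, Pi.sub_apply, smul_eq_mul]
  rw [show ((1 / (d:ℝ) : ℝ) : ℂ) = 1 / (d:ℂ) by push_cast; ring]
  field_simp
  simp

lemma A2_mulVec_u (hd : 2 ≤ d) :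
    (A2 d).mulVec (fun z : Fin d × Fin d => if z.1 = z.2 then (1:ℂ) else 0) =
      ((1 / (d:ℝ) : ℝ) : ℂ) • (fun z : Fin d × Fin d => if z.1 = z.2 then (1:ℂ) else 0) := by
  obtain ⟨⟨hR0, -, -, -⟩, hC0, hC1, hC2, hC3⟩ := cast_facts hd
  rw [A2, Matrix.smul_mulVec, Matrix.add_mulVec, Matrix.one_mulVec, Emat_mulVec_u]
  funext z
  by_cases h : z.1 = z.2 <;>
    simp only [Pi.smul_apply, Pi.add_apply, smul_eq_mul, h, if_true, if_false] <;>
    push_cast <;> field_simp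
  all_goals ring

lemma A1_mulVec_w0 {a b : Fin d} (hab : a ≠ b) :
    (A1 d).mulVec (fun z : Fin d × Fin d => if z = (a, b) then (1:ℂ) else 0) =
      ((1 / ((d:ℝ)^2 - 1) : ℝ) : ℂ) •
        (fun z : Fin d × Fin d => if z = (a, b) then (1:ℂ) else 0) := by
  rw [A1, Matrix.smul_mulVec, Matrix.sub_mulVec, Matrix.smul_mulVec,
    Matrix.one_mulVec, Emat_mulVec_w0 a b hab]
  funext z
  simp

lemma A2_mulVec_w0 {a b : Fin d} (hab : a ≠ b) :
    (A2 d).mulVec (fun z : Fin d × Fin d => if z = (a, b) then (1:ℂ) else 0) =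
      ((1 / ((d:ℝ)^2 + d) : ℝ) : ℂ) •
        (fun z : Fin d × Fin d => if z = (a, b) then (1:ℂ) else 0) := by
  rw [A2, Matrix.smul_mulVec, Matrix.add_mulVec, Matrix.one_mulVec,
    Emat_mulVec_w0 a b hab]
  funext z
  simp

lemma u_dot (d : ℕ) :
    star (fun z : Fin d × Fin d => if z.1 = z.2 then (1:ℂ) else 0) ⬝ᵥ
      (fun z : Fin d × Fin d => if z.1 = z.2 then (1:ℂ) else 0) = (d : ℂ) := by
  simp only [dotProduct, Pi.star_apply]
  rw [Finset.sum_congr rfl (fun z _ => show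
      star (if z.1 = z.2 then (1:ℂ) else 0) * (if z.1 = z.2 then (1:ℂ) else 0)
        = if z.1 = z.2 then (1:ℂ) else 0 by split_ifs <;> simp)]
  exact diag_count d

lemma w0_dot (a b : Fin d) :
    star (fun z : Fin d × Fin d => if z = (a, b) then (1:ℂ) else 0) ⬝ᵥ
      (fun z : Fin d × Fin d => if z = (a, b) then (1:ℂ) else 0) = 1 := by
  simp only [dotProduct, Pi.star_apply]
  rw [Finset.sum_congr rfl (fun z _ => show
      star (if z = (a, b) then (1:ℂ) else 0) * (if z = (a, b) then (1:ℂ) else 0)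
        = if z = (a, b) then (1:ℂ) else 0 by split_ifs <;> simp)]
  rw [Finset.sum_ite_eq' Finset.univ]
  simp

end Blocks2

section PT

variable {d k : ℕ}

lemma cast_facts2 {d : ℕ} (hd : 2 ≤ d) : ((d:ℝ)^2 - d ≠ 0) ∧ ((d:ℂ)^2 - d ≠ 0) := by
  have hdR : (2:ℝ) ≤ (d:ℝ) := by exact_mod_cast hd
  have h1 : (d:ℝ)^2 - d ≠ 0 := by nlinarith
  refine ⟨h1, fun h => h1 ?_⟩
  have h' : (((d:ℝ)^2 - d : ℝ) : ℂ) = (d:ℂ)^2 - d := by push_cast; ring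
  rw [← h'] at h; exact_mod_cast h

lemma pt_sym (hd : 2 ≤ d) (x y : Fin d × Fin d) :
    wernerSym d (x.1, y.2) (y.1, x.2) = A2 d x y := by
  obtain ⟨⟨hR0, hR1, hR2, hR3⟩, hC0, hC1, hC2, hC3⟩ := cast_facts hd
  have e1 : ((x.1, y.2) = ((y.1, x.2) : Fin d × Fin d)) ↔ (x.1 = y.1 ∧ x.2 = y.2) := by
    rw [Prod.ext_iff]; constructor <;> rintro ⟨u, v⟩ <;> exact ⟨u, v.symm⟩
  have e3 : ((x.1, y.2).1 = ((y.1, x.2) : Fin d × Fin d).2 ∧ (x.1, y.2).2 =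
      ((y.1, x.2) : Fin d × Fin d).1) ↔ (x.1 = x.2 ∧ y.1 = y.2) := by
    constructor <;> rintro ⟨u, v⟩ <;> exact ⟨u, v.symm⟩
  have e4 : (x = y) ↔ (x.1 = y.1 ∧ x.2 = y.2) := Prod.ext_iff
  simp only [wernerSym, A2, swapOp, Emat, Matrix.smul_apply, Matrix.add_apply,
    Matrix.one_apply, Matrix.of_apply, smul_eq_mul, e1, e3, e4]
  split_ifs <;> (push_cast; field_simp; try ring)

lemma pt_half (hd : 2 ≤ d) (x y : Fin d × Fin d) :
    (((1 : ℂ) / 2) • (wernerSym d + wernerAsym d)) (x.1, y.2) (y.1, x.2) = A1 d x y := by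
  obtain ⟨⟨hR0, hR1, hR2, hR3⟩, hC0, hC1, hC2, hC3⟩ := cast_facts hd
  obtain ⟨hR4, hC4⟩ := cast_facts2 hd
  have e1 : ((x.1, y.2) = ((y.1, x.2) : Fin d × Fin d)) ↔ (x.1 = y.1 ∧ x.2 = y.2) := by
    rw [Prod.ext_iff]; constructor <;> rintro ⟨u, v⟩ <;> exact ⟨u, v.symm⟩
  have e3 : ((x.1, y.2).1 = ((y.1, x.2) : Fin d × Fin d).2 ∧ (x.1, y.2).2 =
      ((y.1, x.2) : Fin d × Fin d).1) ↔ (x.1 = x.2 ∧ y.1 = y.2) := by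
    constructor <;> rintro ⟨u, v⟩ <;> exact ⟨u, v.symm⟩
  have e4 : (x = y) ↔ (x.1 = y.1 ∧ x.2 = y.2) := Prod.ext_iff
  simp only [wernerSym, wernerAsym, A1, swapOp, Emat, Matrix.smul_apply, Matrix.add_apply,
    Matrix.sub_apply, Matrix.one_apply, Matrix.of_apply, smul_eq_mul, e1, e3, e4]
  split_ifs <;> (push_cast; field_simp; try ring)

lemma tau1_pt (hd : 2 ≤ d) (f g : Fin k → Fin d × Fin d) :
    tau₁ d k (fun t => ((f t).1, (g t).2)) (fun t => ((g t).1, (f t).2)) =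
      kpow (A1 d) k f g := by
  unfold tau₁ kpow
  simp only [Matrix.of_apply]
  exact Finset.prod_congr rfl fun t _ => pt_half hd (f t) (g t)

lemma tau2_pt (hd : 2 ≤ d) (f g : Fin k → Fin d × Fin d) :
    tau₂ d k (fun t => ((f t).1, (g t).2)) (fun t => ((g t).1, (f t).2)) =
      kpow (A2 d) k f g := by
  unfold tau₂ kpow
  simp only [Matrix.of_apply]
  exact Finset.prod_congr rfl fun t _ => pt_sym hd (f t) (g t)

end PT

noncomputable def Pmat (d k : ℕ) (p : ℝ) :
    Matrix (Fin k → Fin d × Fin d) (Fin k → Fin d × Fin d) ℂ :=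
  ((p / 2 : ℝ) : ℂ) • (kpow (A1 d) k + kpow (A2 d) k)

noncomputable def Qmat (d k : ℕ) (p : ℝ) :
    Matrix (Fin k → Fin d × Fin d) (Fin k → Fin d × Fin d) ℂ :=
  ((1 / 2 - p : ℝ) : ℂ) • kpow (A2 d) k

noncomputable def Rmat (d k : ℕ) (p : ℝ) :
    Matrix (Fin k → Fin d × Fin d) (Fin k → Fin d × Fin d) ℂ :=
  ((p / 2 : ℝ) : ℂ) • (kpow (A1 d) k - kpow (A2 d) k)

def Wp : Matrix (Fin 2 × Fin 2) (Fin 2 × Fin 2) ℂ :=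
  Matrix.single (0, 1) (0, 1) 1 + Matrix.single (0, 1) (1, 0) 1 +
    Matrix.single (1, 0) (0, 1) 1 + Matrix.single (1, 0) (1, 0) 1

def Wm : Matrix (Fin 2 × Fin 2) (Fin 2 × Fin 2) ℂ :=
  Matrix.single (0, 1) (0, 1) 1 - Matrix.single (0, 1) (1, 0) 1 -
    Matrix.single (1, 0) (0, 1) 1 + Matrix.single (1, 0) (1, 0) 1

set_option maxHeartbeats 1000000 in
lemma M_eq {d k : ℕ} (hd : 2 ≤ d) (p : ℝ) :
    ptBob (rhoPDK d k p) =
      Matrix.single ((0 : Fin 2), (0 : Fin 2)) ((0 : Fin 2), (0 : Fin 2)) (1 : ℂ) ⊗ₖ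
          Pmat d k p +
        Matrix.single ((1 : Fin 2), (1 : Fin 2)) ((1 : Fin 2), (1 : Fin 2)) (1 : ℂ) ⊗ₖ
          Pmat d k p +
        ((1 / 2 : ℝ) : ℂ) • (Wp ⊗ₖ (Qmat d k p + Rmat d k p)) +
        ((1 / 2 : ℝ) : ℂ) • (Wm ⊗ₖ (Qmat d k p - Rmat d k p)) := by
  ext ⟨⟨a1, a2⟩, f⟩ ⟨⟨b1, b2⟩, g⟩
  simp only [ptBob, rhoPDK, Pmat, Qmat, Rmat, Wp, Wm, Matrix.of_apply, Matrix.add_apply,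
    Matrix.sub_apply, Matrix.smul_apply, Matrix.kroneckerMap_apply, smul_eq_mul,
    Matrix.single, tau1_pt hd, tau2_pt hd, Prod.mk.injEq]
  fin_cases a1 <;> fin_cases a2 <;> fin_cases b1 <;> fin_cases b2 <;>
    norm_num <;> push_cast <;> ring

lemma stdBasis_conjT {n : Type*} [DecidableEq n] (i j : n) :
    (Matrix.single i j (1 : ℂ))ᴴ = Matrix.single j i 1 := by
  ext a b
  simp only [Matrix.conjTranspose_apply, Matrix.single, Matrix.of_apply]
  by_cases h1 : i = b <;> by_cases h2 : j = a <;> simp [h1, h2]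

lemma Wp_psd : Wp.PosSemidef := by
  rw [psd_iff_eq_ct_mul_self]
  refine ⟨Matrix.single (0, 1) (0, 1) 1 + Matrix.single (0, 1) (1, 0) 1, ?_⟩
  rw [Matrix.conjTranspose_add, stdBasis_conjT, stdBasis_conjT, add_mul, mul_add, mul_add,
    Matrix.single_mul_single_same, Matrix.single_mul_single_same,
    Matrix.single_mul_single_same, Matrix.single_mul_single_same, Wp]
  norm_num
  abel

lemma Wm_psd : Wm.PosSemidef := by
  rw [psd_iff_eq_ct_mul_self]
  refine ⟨Matrix.single (0, 1) (0, 1) 1 - Matrix.single (0, 1) (1, 0) 1, ?_⟩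
  rw [Matrix.conjTranspose_sub, stdBasis_conjT, stdBasis_conjT, sub_mul, mul_sub, mul_sub,
    Matrix.single_mul_single_same, Matrix.single_mul_single_same,
    Matrix.single_mul_single_same, Matrix.single_mul_single_same, Wm]
  norm_num
  abel

lemma psd_of_conditions {d k : ℕ} {p : ℝ} (hd : 2 ≤ d) (hk : 1 ≤ k) (hp0 : 0 < p)
    (hp3 : p ≤ 1 / 3) (hratio : ((d : ℝ) / ((d : ℝ) - 1)) ^ k ≤ (1 - p) / p) :
    (ptBob (rhoPDK d k p)).PosSemidef := by
  rw [M_eq hd p]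
  have hT1 := kpow_psd (A1_psd hd) k
  have hT2 := kpow_psd (A2_psd hd) k
  have hP : (Pmat d k p).PosSemidef := psd_real_smul (hT1.add hT2) (by linarith)
  have hQpR : (Qmat d k p + Rmat d k p).PosSemidef := by
    have heq : Qmat d k p + Rmat d k p =
        (((1 - 3 * p) / 2 : ℝ) : ℂ) • kpow (A2 d) k + ((p / 2 : ℝ) : ℂ) • kpow (A1 d) k := by
      ext x y
      simp only [Qmat, Rmat, Matrix.add_apply, Matrix.smul_apply, Matrix.sub_apply,
        smul_eq_mul]
      push_cast
      ring
    rw [heq]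
    exact (psd_real_smul hT2 (by linarith)).add (psd_real_smul hT1 (by linarith))
  have hQmR : (Qmat d k p - Rmat d k p).PosSemidef := by
    have hkey : (kpow ((((d : ℝ) / ((d : ℝ) - 1) : ℝ) : ℂ) • A2 d) k - kpow (A1 d) k).PosSemidef :=
      kpow_sub_psd (A1_psd hd) (gap_psd hd) k
    rw [kpow_smul, show ((((d : ℝ) / ((d : ℝ) - 1) : ℝ) : ℂ)) ^ k =
      ((((d : ℝ) / ((d : ℝ) - 1)) ^ k : ℝ) : ℂ) by push_cast; ring] at hkey
    have heq : Qmat d k p - Rmat d k p =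
        ((p / 2 : ℝ) : ℂ) • (((((d : ℝ) / ((d : ℝ) - 1)) ^ k : ℝ) : ℂ) • kpow (A2 d) k -
            kpow (A1 d) k) +
          (((p / 2) * ((1 - p) / p - ((d : ℝ) / ((d : ℝ) - 1)) ^ k) : ℝ) : ℂ) •
            kpow (A2 d) k := by
      ext x y
      simp only [Qmat, Rmat, Matrix.add_apply, Matrix.smul_apply, Matrix.sub_apply,
        smul_eq_mul]
      push_cast
      field_simp
      ring
    rw [heq]
    refine (psd_real_smul hkey (by linarith)).add (psd_real_smul hT2 ?_)
    have : 0 ≤ (1 - p) / p - ((d : ℝ) / ((d : ℝ) - 1)) ^ k := by linarith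
    positivity
  exact (((kron_psd (stdBasis_diag_psd _) hP).add (kron_psd (stdBasis_diag_psd _) hP)).add
    (psd_real_smul (kron_psd Wp_psd hQpR) (by norm_num))).add
    (psd_real_smul (kron_psd Wm_psd hQmR) (by norm_num))

set_option maxHeartbeats 1000000 in
lemma conditions_of_psd {d k : ℕ} {p : ℝ} (hd : 2 ≤ d) (hk : 1 ≤ k) (hp0 : 0 < p)
    (h : (ptBob (rhoPDK d k p)).PosSemidef) :
    p ≤ 1 / 3 ∧ ((d : ℝ) / ((d : ℝ) - 1)) ^ k ≤ (1 - p) / p := by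
  have hdR : (2:ℝ) ≤ (d:ℝ) := by exact_mod_cast hd
  rw [M_eq hd p] at h
  constructor
  · -- test vector: (e01 + e10) ⊗ u^{⊗k}
    set vp : Fin 2 × Fin 2 → ℂ := fun a => (if a = (0, 1) then (1:ℂ) else 0) +
      (if a = (1, 0) then 1 else 0) with hvp
    set uvz : Fin d × Fin d → ℂ := fun z => if z.1 = z.2 then (1:ℂ) else 0 with huvz
    set uK : (Fin k → Fin d × Fin d) → ℂ := fun f => ∏ t, uvz (f t) with huK
    have hA2u : (A2 d).mulVec uvz = ((1 / (d:ℝ) : ℝ) : ℂ) • uvz := by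
      rw [huvz]; exact A2_mulVec_u hd
    have hA1u : (A1 d).mulVec uvz = ((0 : ℝ) : ℂ) • uvz := by
      rw [huvz]; exact A1_mulVec_u hd
    have hQ2 : (kpow (A2 d) k).mulVec uK = (((1 / (d:ℝ) : ℝ) : ℂ)) ^ k • uK := by
      rw [huK]; exact kpow_mulVec _ _ _ hA2u k
    have hQ1 : (kpow (A1 d) k).mulVec uK = (((0 : ℝ) : ℂ)) ^ k • uK := by
      rw [huK]; exact kpow_mulVec _ _ _ hA1u k
    have hdot : star uK ⬝ᵥ uK = (d:ℂ) ^ k := by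
      rw [huK, prodvec_dot, show star uvz ⬝ᵥ uvz = (d:ℂ) from by rw [huvz]; exact u_dot d]
    have h1 := h.dotProduct_mulVec_nonneg (fun q => vp q.1 * uK q.2)
    simp only [Matrix.add_mulVec, Matrix.smul_mulVec, dotProduct_add,
      dotProduct_smul, dot_kron, smul_eq_mul] at h1
    have hk0 : k ≠ 0 := by omega
    have hXQ : star uK ⬝ᵥ (Qmat d k p).mulVec uK =
        ((1 / 2 - p : ℝ) : ℂ) * (((1 / (d:ℝ) : ℝ) : ℂ)) ^ k * (d:ℂ) ^ k := by
      rw [Qmat, Matrix.smul_mulVec, hQ2]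
      simp only [dotProduct_smul, smul_eq_mul, hdot]
      ring
    have hXR : star uK ⬝ᵥ (Rmat d k p).mulVec uK =
        ((p / 2 : ℝ) : ℂ) * (((0 : ℝ) : ℂ) ^ k * (d:ℂ) ^ k -
          (((1 / (d:ℝ) : ℝ) : ℂ)) ^ k * (d:ℂ) ^ k) := by
      rw [Rmat, Matrix.smul_mulVec, Matrix.sub_mulVec, hQ1, hQ2]
      simp only [dotProduct_smul, dotProduct_sub, smul_eq_mul, hdot]
      try ring
    have hS1 : star vp ⬝ᵥ (Matrix.single ((0 : Fin 2), (0 : Fin 2))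
        ((0 : Fin 2), (0 : Fin 2)) (1 : ℂ)).mulVec vp = 0 := by
      norm_num [hvp, dotProduct, Matrix.mulVec, Fintype.sum_prod_type,
        Fin.sum_univ_two, Matrix.single, Matrix.of_apply, Prod.ext_iff]
    have hS2 : star vp ⬝ᵥ (Matrix.single ((1 : Fin 2), (1 : Fin 2))
        ((1 : Fin 2), (1 : Fin 2)) (1 : ℂ)).mulVec vp = 0 := by
      norm_num [hvp, dotProduct, Matrix.mulVec, Fintype.sum_prod_type,
        Fin.sum_univ_two, Matrix.single, Matrix.of_apply, Prod.ext_iff]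
    have hS3 : star vp ⬝ᵥ Wp.mulVec vp = 4 := by
      norm_num [hvp, Wp, dotProduct, Matrix.mulVec, Fintype.sum_prod_type,
        Fin.sum_univ_two, Matrix.single, Matrix.of_apply, Matrix.add_apply,
        Prod.ext_iff]
    have hS4 : star vp ⬝ᵥ Wm.mulVec vp = 0 := by
      norm_num [hvp, Wm, dotProduct, Matrix.mulVec, Fintype.sum_prod_type,
        Fin.sum_univ_two, Matrix.single, Matrix.of_apply, Matrix.add_apply,
        Matrix.sub_apply, Prod.ext_iff]
    rw [hS1, hS2, hS3, hS4, hXQ, hXR] at h1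
    have h1' : (0:ℂ) ≤ ((2 * ((1 - 3 * p) / 2 * (1 / (d:ℝ)) ^ k * (d:ℝ) ^ k) : ℝ) : ℂ) := by
      convert h1 using 1
      push_cast
      rw [zero_pow hk0]
      ring
    have hre := Complex.zero_le_real.mp h1'
    have hone : (1 / (d:ℝ)) ^ k * (d:ℝ) ^ k = 1 := by
      rw [one_div, inv_pow, inv_mul_cancel₀]
      positivity
    nlinarith [hre, hone]
  · -- test vector: (e01 - e10) ⊗ w0^{⊗k}
    have hab : (⟨0, by omega⟩ : Fin d) ≠ ⟨1, by omega⟩ := by simp [Fin.ext_iff]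
    set vm : Fin 2 × Fin 2 → ℂ := fun a => (if a = (0, 1) then (1:ℂ) else 0) -
      (if a = (1, 0) then 1 else 0) with hvm
    set wvz : Fin d × Fin d → ℂ := fun z =>
      if z = ((⟨0, by omega⟩ : Fin d), (⟨1, by omega⟩ : Fin d)) then (1:ℂ) else 0 with hwvz
    set wK : (Fin k → Fin d × Fin d) → ℂ := fun f => ∏ t, wvz (f t) with hwK
    have hA2w : (A2 d).mulVec wvz = ((1 / ((d:ℝ)^2 + d) : ℝ) : ℂ) • wvz := by
      rw [hwvz]; exact A2_mulVec_w0 hab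
    have hA1w : (A1 d).mulVec wvz = ((1 / ((d:ℝ)^2 - 1) : ℝ) : ℂ) • wvz := by
      rw [hwvz]; exact A1_mulVec_w0 hab
    have hQ2 : (kpow (A2 d) k).mulVec wK = (((1 / ((d:ℝ)^2 + d) : ℝ) : ℂ)) ^ k • wK := by
      rw [hwK]; exact kpow_mulVec _ _ _ hA2w k
    have hQ1 : (kpow (A1 d) k).mulVec wK = (((1 / ((d:ℝ)^2 - 1) : ℝ) : ℂ)) ^ k • wK := by
      rw [hwK]; exact kpow_mulVec _ _ _ hA1w k
    have hdot : star wK ⬝ᵥ wK = 1 := by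
      rw [hwK, prodvec_dot, show star wvz ⬝ᵥ wvz = 1 from by rw [hwvz]; exact w0_dot _ _]
      simp
    have h2 := h.dotProduct_mulVec_nonneg (fun q => vm q.1 * wK q.2)
    simp only [Matrix.add_mulVec, Matrix.smul_mulVec, dotProduct_add,
      dotProduct_smul, dot_kron, smul_eq_mul] at h2
    have hX : star wK ⬝ᵥ (Qmat d k p - Rmat d k p).mulVec wK =
        (((1 / 2 - p) * (1 / ((d:ℝ)^2 + d)) ^ k -
          p / 2 * ((1 / ((d:ℝ)^2 - 1)) ^ k - (1 / ((d:ℝ)^2 + d)) ^ k) : ℝ) : ℂ) := by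
      rw [Qmat, Rmat, Matrix.sub_mulVec, Matrix.smul_mulVec, Matrix.smul_mulVec,
        Matrix.sub_mulVec, hQ1, hQ2]
      simp only [dotProduct_sub, dotProduct_smul, smul_eq_mul, hdot]
      push_cast
      ring
    have hS1 : star vm ⬝ᵥ (Matrix.single ((0 : Fin 2), (0 : Fin 2))
        ((0 : Fin 2), (0 : Fin 2)) (1 : ℂ)).mulVec vm = 0 := by
      norm_num [hvm, dotProduct, Matrix.mulVec, Fintype.sum_prod_type,
        Fin.sum_univ_two, Matrix.single, Matrix.of_apply, Prod.ext_iff]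
    have hS2 : star vm ⬝ᵥ (Matrix.single ((1 : Fin 2), (1 : Fin 2))
        ((1 : Fin 2), (1 : Fin 2)) (1 : ℂ)).mulVec vm = 0 := by
      norm_num [hvm, dotProduct, Matrix.mulVec, Fintype.sum_prod_type,
        Fin.sum_univ_two, Matrix.single, Matrix.of_apply, Prod.ext_iff]
    have hS3 : star vm ⬝ᵥ Wp.mulVec vm = 0 := by
      norm_num [hvm, Wp, dotProduct, Matrix.mulVec, Fintype.sum_prod_type,
        Fin.sum_univ_two, Matrix.single, Matrix.of_apply, Matrix.add_apply,
        Prod.ext_iff]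
    have hS4 : star vm ⬝ᵥ Wm.mulVec vm = 4 := by
      norm_num [hvm, Wm, dotProduct, Matrix.mulVec, Fintype.sum_prod_type,
        Fin.sum_univ_two, Matrix.single, Matrix.of_apply, Matrix.add_apply,
        Matrix.sub_apply, Prod.ext_iff]
    rw [hS1, hS2, hS3, hS4, hX] at h2
    have h2' : (0:ℂ) ≤ ((2 * ((1 / 2 - p) * (1 / ((d:ℝ)^2 + d)) ^ k -
        p / 2 * ((1 / ((d:ℝ)^2 - 1)) ^ k - (1 / ((d:ℝ)^2 + d)) ^ k)) : ℝ) : ℂ) := by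
      convert h2 using 1
      push_cast
      ring
    have hre := Complex.zero_le_real.mp h2'
    have hc1pos : (0:ℝ) < 1 / ((d:ℝ)^2 - 1) := by
      have : (0:ℝ) < (d:ℝ)^2 - 1 := by nlinarith
      positivity
    have hc2pos : (0:ℝ) < 1 / ((d:ℝ)^2 + d) := by positivity
    have hdd : (d:ℝ) / ((d:ℝ) - 1) = (1 / ((d:ℝ)^2 - 1)) / (1 / ((d:ℝ)^2 + d)) := by
      have h1 : (d:ℝ) - 1 ≠ 0 := by nlinarith
      have h2 : (d:ℝ)^2 - 1 ≠ 0 := by nlinarith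
      have h3 : (d:ℝ)^2 + d ≠ 0 := by nlinarith
      field_simp
      ring
    rw [hdd, div_pow, div_le_div_iff₀ (pow_pos hc2pos k) hp0]
    nlinarith [pow_pos hc2pos k, pow_pos hc1pos k]

/-- for `d ≥ 2`, `k ≥ 1` and `0 < p ≤ 1/2`, the state `ρ_{(p,d,k)}` is PPT
with respect to Bob's subsystems if and only if `0 < p ≤ 1/3` and
`(1−p)/p ≥ (d/(d−1))^k`. In particular, for every `p ∈ (0,1/3]` and every `k ≥ 1` there
exists `d` such that `ρ_{(p,d,k)}` is PPT. -/
theorem rhoPDK_ppt_iff (d k : ℕ) (p : ℝ) (hd : 2 ≤ d) (hk : 1 ≤ k)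
    (hp0 : 0 < p) (hp2 : p ≤ 1 / 2) :
    ((ptBob (rhoPDK d k p)).PosSemidef ↔
      (0 < p ∧ p ≤ 1 / 3 ∧ ((d : ℝ) / ((d : ℝ) - 1)) ^ k ≤ (1 - p) / p)) ∧
    (∀ p' : ℝ, 0 < p' → p' ≤ 1 / 3 → ∀ k' : ℕ, 1 ≤ k' →
      ∃ d' : ℕ, 2 ≤ d' ∧ (ptBob (rhoPDK d' k' p')).PosSemidef) := by
  constructor
  · constructor
    · intro h
      obtain ⟨h1, h2⟩ := conditions_of_psd hd hk hp0 h
      exact ⟨hp0, h1, h2⟩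
    · rintro ⟨-, h1, h2⟩
      exact psd_of_conditions hd hk hp0 h1 h2
  · intro p' hp0' hp3' k' hk'
    refine ⟨2 * k', by omega, ?_⟩
    apply psd_of_conditions (by omega) hk' hp0' hp3'
    have hkR : (1:ℝ) ≤ (k':ℝ) := by exact_mod_cast hk'
    have hx0 : (0:ℝ) < 1 - 1 / (2 * (k':ℝ)) := by
      have : 1 / (2 * (k':ℝ)) ≤ 1 / 2 := by
        apply div_le_div_of_nonneg_left <;> nlinarith
      linarith
    have hber : (1/2 : ℝ) ≤ (1 - 1 / (2 * (k':ℝ))) ^ k' := by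
      have h := one_add_mul_le_pow (a := -(1 / (2 * (k':ℝ)))) (by nlinarith) k'
      have he : 1 + (k':ℝ) * -(1 / (2 * (k':ℝ))) = 1/2 := by
        field_simp
        ring
      rw [he] at h
      calc (1/2 : ℝ) ≤ (1 + -(1 / (2 * (k':ℝ)))) ^ k' := h
        _ = (1 - 1 / (2 * (k':ℝ))) ^ k' := by ring_nf
    have hinv : ((2 * k' : ℕ) : ℝ) / (((2 * k' : ℕ) : ℝ) - 1) =
        (1 - 1 / (2 * (k':ℝ)))⁻¹ := by
      have h1 : (2 * (k':ℝ)) - 1 ≠ 0 := by nlinarith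
      have h2 : (2 * (k':ℝ)) ≠ 0 := by nlinarith
      push_cast
      rw [show (1 : ℝ) - 1 / (2 * (k':ℝ)) = (2 * (k':ℝ) - 1) / (2 * (k':ℝ)) by field_simp,
        inv_div]
    rw [hinv, inv_pow]
    have hp2' : ((1 - 1 / (2 * (k':ℝ))) ^ k')⁻¹ ≤ 2 := by
      rw [inv_le_comm₀ (pow_pos hx0 k') (by norm_num)]
      calc (2:ℝ)⁻¹ = 1/2 := by norm_num
        _ ≤ _ := hber
    have h3 : (2:ℝ) ≤ (1 - p') / p' := by
      rw [le_div_iff₀ hp0']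
      linarith
    linarith
end

section
/- Let σ_sep be a density matrix on ℂ^{d}⊗ℂ^{d}⊗ℂ^{d_{A'}}⊗ℂ^{d_{B'}} (factors A,B,A',B') that is separable with respect to the cut AA'|BB', and let U = Σ_{k,l=0}^{d−1}|kl⟩⟨kl|_{AB}⊗U^{kl} be any twisting controlled by the standard product basis of the AB factors. Set σ_{AB} = Tr_{A'B'}(U σ_sep U†). Then Tr(P₊ σ_{AB}) ≤ 1/d, where P₊ is the projector onto the maximally entangled state |ψ₊⟩ = (1/√d)Σ_{i=0}^{d−1}|ii⟩ of ℂ^{d}⊗ℂ^{d}. -/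
open Matrix Kronecker BigOperators
open scoped ComplexOrder Classical

/-- Separability of a state on `A ⊗ B ⊗ A' ⊗ B'` (indexed as `(A×B)×(A'×B')`)
with respect to the cut `AA'|BB'`. -/
def SepCutAApBBp {dA dB dAp dBp : ℕ}
    (σ : Matrix ((Fin dA × Fin dB) × (Fin dAp × Fin dBp))
      ((Fin dA × Fin dB) × (Fin dAp × Fin dBp)) ℂ) : Prop :=
  ∃ (N : ℕ) (q : Fin N → ℝ)
    (τ : Fin N → Matrix (Fin dA × Fin dAp) (Fin dA × Fin dAp) ℂ)
    (ω : Fin N → Matrix (Fin dB × Fin dBp) (Fin dB × Fin dBp) ℂ),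
    (∀ m, 0 ≤ q m) ∧ (∑ m, q m = 1) ∧
    (∀ m, (τ m).PosSemidef ∧ (τ m).trace = 1) ∧
    (∀ m, (ω m).PosSemidef ∧ (ω m).trace = 1) ∧
    (∀ x y, σ x y = ∑ m, (q m : ℂ) *
      (τ m (x.1.1, x.2.1) (y.1.1, y.2.1) * ω m (x.1.2, x.2.2) (y.1.2, y.2.2)))

/-- The maximally entangled state `|ψ₊⟩ = (1/√d) Σ_i |ii⟩` of `ℂ^d ⊗ ℂ^d`. -/
noncomputable def maxEntVec (d : ℕ) : Fin d × Fin d → ℂ := fun x =>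
  if x.1 = x.2 then ((Real.sqrt d : ℝ) : ℂ)⁻¹ else 0

/-- The projector `P₊` onto the maximally entangled state of `ℂ^d ⊗ ℂ^d`. -/
noncomputable def Pplus (d : ℕ) : Matrix (Fin d × Fin d) (Fin d × Fin d) ℂ :=
  Matrix.vecMulVec (maxEntVec d) (star (maxEntVec d))

/-! ### Auxiliary lemmas -/

lemma tso_comm2 {α β γ : Type*} [Fintype α] [Fintype β] [Fintype γ]
    {M : Type*} [AddCommMonoid M] (F : α → β → γ → M) :
    (∑ a, ∑ b, ∑ c, F a b c) = ∑ b, ∑ c, ∑ a, F a b c :=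
  calc (∑ a, ∑ b, ∑ c, F a b c) = ∑ b, ∑ a, ∑ c, F a b c := Finset.sum_comm
    _ = ∑ b, ∑ c, ∑ a, F a b c := Finset.sum_congr rfl fun _ _ => Finset.sum_comm

lemma tso_comm3 {α β γ δ : Type*} [Fintype α] [Fintype β] [Fintype γ] [Fintype δ]
    {M : Type*} [AddCommMonoid M] (F : α → β → γ → δ → M) :
    (∑ a, ∑ b, ∑ c, ∑ e, F a b c e) = ∑ b, ∑ c, ∑ e, ∑ a, F a b c e :=
  calc (∑ a, ∑ b, ∑ c, ∑ e, F a b c e) = ∑ b, ∑ a, ∑ c, ∑ e, F a b c e := Finset.sum_comm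
    _ = ∑ b, ∑ c, ∑ a, ∑ e, F a b c e := Finset.sum_congr rfl fun _ _ => Finset.sum_comm
    _ = ∑ b, ∑ c, ∑ e, ∑ a, F a b c e :=
        Finset.sum_congr rfl fun _ _ => Finset.sum_congr rfl fun _ _ => Finset.sum_comm

lemma tso_star_mul_self (z : ℂ) : star z * z = ((Complex.normSq z : ℝ) : ℂ) := by
  rw [Complex.star_def, mul_comm, Complex.mul_conj]

lemma tso_sqrt_normSq_sum_le {K : Type*} [Fintype K] {n : ℕ} (v : Fin n → K → ℂ) :
    Real.sqrt (∑ x, Complex.normSq (∑ i, v i x)) ≤ ∑ i, Real.sqrt (∑ x, Complex.normSq (v i x)) := by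
  let V : Fin n → EuclideanSpace ℂ K := fun i => WithLp.toLp 2 (v i)
  have hnorm : ∀ w : EuclideanSpace ℂ K, ‖w‖ = Real.sqrt (∑ x, Complex.normSq (w x)) := by
    intro w
    rw [EuclideanSpace.norm_eq]
    congr 1
    apply Finset.sum_congr rfl
    intro x _
    rw [← Complex.normSq_eq_norm_sq]
  have hsum : ∀ x, (∑ i, V i) x = ∑ i, v i x := by
    intro x
    rw [WithLp.ofLp_sum]; exact Finset.sum_apply x Finset.univ _
  calc Real.sqrt (∑ x, Complex.normSq (∑ i, v i x)) = ‖∑ i, V i‖ := by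
        rw [hnorm]
        congr 1
        exact Finset.sum_congr rfl fun x _ => by rw [hsum]
    _ ≤ ∑ i, ‖V i‖ := norm_sum_le _ _
    _ = ∑ i, Real.sqrt (∑ x, Complex.normSq (v i x)) :=
        Finset.sum_congr rfl fun i _ => by rw [hnorm]

lemma tso_U_entry {d dAp dBp : ℕ}
    (Ukl : Fin d × Fin d → Matrix (Fin dAp × Fin dBp) (Fin dAp × Fin dBp) ℂ)
    (a b : Fin d × Fin d) (u v' : Fin dAp × Fin dBp) :
    (∑ kl : Fin d × Fin d, Matrix.single kl kl (1:ℂ) ⊗ₖ Ukl kl) (a, u) (b, v')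
      = if a = b then Ukl a u v' else 0 := by
  rw [Matrix.sum_apply]
  simp only [Matrix.kroneckerMap_apply, Matrix.single, Matrix.of_apply]
  by_cases hab : a = b
  · subst hab
    rw [Finset.sum_eq_single a]
    · simp
    · intro kl _ hkl; simp [hkl]
    · simp
  · rw [if_neg hab]
    apply Finset.sum_eq_zero
    intro kl _
    by_cases h1 : kl = a
    · subst h1; simp [hab]
    · simp [h1]

lemma tso_prod_entry {d dAp dBp : ℕ}
    (σsep : Matrix ((Fin d × Fin d) × (Fin dAp × Fin dBp)) ((Fin d × Fin d) × (Fin dAp × Fin dBp)) ℂ)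
    (U : Matrix ((Fin d × Fin d) × (Fin dAp × Fin dBp)) ((Fin d × Fin d) × (Fin dAp × Fin dBp)) ℂ)
    (Ukl : Fin d × Fin d → Matrix (Fin dAp × Fin dBp) (Fin dAp × Fin dBp) ℂ)
    (hU : ∀ (a b : Fin d × Fin d) (u v' : Fin dAp × Fin dBp),
      U (a, u) (b, v') = if a = b then Ukl a u v' else 0)
    (a b : Fin d × Fin d) (u v' : Fin dAp × Fin dBp) :
    (U * σsep * Uᴴ) (a, u) (b, v')
      = ∑ x : Fin dAp × Fin dBp, ∑ y : Fin dAp × Fin dBp,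
          Ukl a u x * σsep (a, x) (b, y) * star (Ukl b v' y) := by
  have inner1 : ∀ e, (∑ c, U (a,u) c * σsep c e)
      = ∑ x : Fin dAp × Fin dBp, Ukl a u x * σsep (a, x) e := by
    intro e
    rw [Fintype.sum_prod_type (f := fun c => U (a,u) c * σsep c e)]
    rw [Finset.sum_eq_single a]
    · simp [hU]
    · intro c _ hc
      apply Finset.sum_eq_zero; intro x _
      simp only [hU, if_neg (Ne.symm hc), zero_mul]
    · simp
  simp only [Matrix.mul_apply, Matrix.conjTranspose_apply, inner1]
  rw [Fintype.sum_prod_type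
    (f := fun e => (∑ x : Fin dAp × Fin dBp, Ukl a u x * σsep (a, x) e) * star (U (b,v') e))]
  rw [Finset.sum_eq_single b]
  · simp only [hU, eq_self_iff_true, if_true, Finset.sum_mul]
    rw [Finset.sum_comm]
  · intro c _ hc
    apply Finset.sum_eq_zero; intro y _
    simp only [hU, if_neg (Ne.symm hc), star_zero, mul_zero]
  · simp

lemma tso_traceP {d : ℕ} (M : Matrix (Fin d × Fin d) (Fin d × Fin d) ℂ) :
    (Pplus d * M).trace = (d:ℂ)⁻¹ * ∑ i : Fin d, ∑ j : Fin d, M (j, j) (i, i) := by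
  have hc : ((Real.sqrt d : ℝ) : ℂ)⁻¹ * star ((Real.sqrt d : ℝ) : ℂ)⁻¹ = (d:ℂ)⁻¹ := by
    simp only [← Complex.ofReal_inv, Complex.star_def, Complex.conj_ofReal, ← Complex.ofReal_mul]
    rw [← mul_inv, Real.mul_self_sqrt (Nat.cast_nonneg d)]
    push_cast
    ring
  rw [Matrix.trace]
  rw [Fintype.sum_prod_type (f := fun a => (Pplus d * M).diag a)]
  simp only [Matrix.diag_apply]
  have hb : ∀ a : Fin d × Fin d, (Pplus d * M) a a
      = maxEntVec d a * ∑ j : Fin d, star (maxEntVec d (j,j)) * M (j,j) a := by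
    intro a
    rw [Matrix.mul_apply, Fintype.sum_prod_type (f := fun b => Pplus d a b * M b a)]
    simp only [Pplus, Matrix.vecMulVec_apply, Pi.star_apply, Finset.mul_sum]
    apply Finset.sum_congr rfl
    intro j _
    rw [Finset.sum_eq_single j]
    · ring
    · intro j' _ hj'
      simp [maxEntVec, Ne.symm hj', mul_assoc]
    · simp
  simp only [hb]
  simp only [maxEntVec, ite_mul, zero_mul, Finset.sum_ite_eq, Finset.mem_univ, if_true]
  rw [Finset.mul_sum]
  apply Finset.sum_congr rfl
  intro i _
  rw [Finset.mul_sum, Finset.mul_sum]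
  apply Finset.sum_congr rfl
  intro j _
  rw [← mul_assoc, hc]

lemma tso_unitary_rows {n : Type*} [Fintype n] [DecidableEq n] (U : Matrix n n ℂ)
    (hU : U ∈ Matrix.unitaryGroup n ℂ) (x y : n) :
    ∑ u : n, U u x * star (U u y) = if x = y then 1 else 0 := by
  have h : star U * U = 1 := hU.1
  have h2 : (star U * U) x y = (1 : Matrix n n ℂ) x y := by rw [h]
  rw [Matrix.mul_apply] at h2
  simp only [Matrix.star_apply, Matrix.one_apply] at h2
  calc ∑ u : n, U u x * star (U u y) = star (∑ u : n, star (U u x) * U u y) := by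
        rw [star_sum]
        apply Finset.sum_congr rfl
        intro u _
        rw [StarMul.star_mul, star_star]
        ring
    _ = if x = y then 1 else 0 := by
        rw [h2]
        by_cases hxy : x = y <;> simp [hxy]

/-- The vectors whose Gram matrix reproduces the twisted reduced state. -/
noncomputable def tsoVec {d dAp dBp N : ℕ}
    (B : Fin N → Matrix (Fin d × Fin dAp) (Fin d × Fin dAp) ℂ)
    (C : Fin N → Matrix (Fin d × Fin dBp) (Fin d × Fin dBp) ℂ)
    (Ukl : Fin d × Fin d → Matrix (Fin dAp × Fin dBp) (Fin dAp × Fin dBp) ℂ)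
    (m : Fin N) (i : Fin d) :
    (((Fin d × Fin dAp) × (Fin d × Fin dBp)) × (Fin dAp × Fin dBp)) → ℂ := fun x =>
  ∑ y : Fin dAp × Fin dBp, star (Ukl (i, i) x.2 y) * (B m x.1.1 (i, y.1) * C m x.1.2 (i, y.2))

lemma tso_key_identity {d dAp dBp N : ℕ}
    (q : Fin N → ℝ)
    (B : Fin N → Matrix (Fin d × Fin dAp) (Fin d × Fin dAp) ℂ)
    (C : Fin N → Matrix (Fin d × Fin dBp) (Fin d × Fin dBp) ℂ)
    (Ukl : Fin d × Fin d → Matrix (Fin dAp × Fin dBp) (Fin dAp × Fin dBp) ℂ)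
    (i j : Fin d) :
    (∑ u : Fin dAp × Fin dBp, ∑ p : Fin dAp × Fin dBp, ∑ y : Fin dAp × Fin dBp,
      Ukl (j,j) u p * (∑ m, (q m : ℂ) *
        ((∑ r, star (B m r (j, p.1)) * B m r (i, y.1)) *
         (∑ s, star (C m s (j, p.2)) * C m s (i, y.2)))) * star (Ukl (i,i) u y))
    = ∑ m, (q m : ℂ) * ∑ x : ((Fin d × Fin dAp) × (Fin d × Fin dBp)) × (Fin dAp × Fin dBp),
        star (tsoVec B C Ukl m j x) * tsoVec B C Ukl m i x := by
  have step2 : (∑ u : Fin dAp × Fin dBp, ∑ p : Fin dAp × Fin dBp, ∑ y : Fin dAp × Fin dBp,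
      Ukl (j,j) u p * (∑ m, (q m : ℂ) *
        ((∑ r, star (B m r (j, p.1)) * B m r (i, y.1)) *
         (∑ s, star (C m s (j, p.2)) * C m s (i, y.2)))) * star (Ukl (i,i) u y))
      = ∑ u : Fin dAp × Fin dBp, ∑ p : Fin dAp × Fin dBp, ∑ y : Fin dAp × Fin dBp,
          ∑ m, ∑ r, ∑ s, (q m : ℂ) *
            (Ukl (j,j) u p * star (Ukl (i,i) u y) *
              (star (B m r (j, p.1)) * B m r (i, y.1)) *
              (star (C m s (j, p.2)) * C m s (i, y.2))) := by
    apply Finset.sum_congr rfl; intro u _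
    apply Finset.sum_congr rfl; intro p _
    apply Finset.sum_congr rfl; intro y _
    simp only [Finset.mul_sum, Finset.sum_mul]
    apply Finset.sum_congr rfl; intro m _
    rw [Finset.sum_comm]
    apply Finset.sum_congr rfl; intro r _
    apply Finset.sum_congr rfl; intro s _
    ring
  rw [step2]
  have step3 : (∑ u : Fin dAp × Fin dBp, ∑ p : Fin dAp × Fin dBp, ∑ y : Fin dAp × Fin dBp,
      ∑ m, ∑ r, ∑ s, (q m : ℂ) *
        (Ukl (j,j) u p * star (Ukl (i,i) u y) *
          (star (B m r (j, p.1)) * B m r (i, y.1)) *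
          (star (C m s (j, p.2)) * C m s (i, y.2))))
      = ∑ m, ∑ r, ∑ s, ∑ u : Fin dAp × Fin dBp, ∑ p : Fin dAp × Fin dBp, ∑ y : Fin dAp × Fin dBp,
          (q m : ℂ) *
            (Ukl (j,j) u p * star (Ukl (i,i) u y) *
              (star (B m r (j, p.1)) * B m r (i, y.1)) *
              (star (C m s (j, p.2)) * C m s (i, y.2))) := by
    rw [show (∑ u : Fin dAp × Fin dBp, ∑ p : Fin dAp × Fin dBp, ∑ y : Fin dAp × Fin dBp,
        ∑ m, ∑ r, ∑ s, (q m : ℂ) *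
          (Ukl (j,j) u p * star (Ukl (i,i) u y) *
            (star (B m r (j, p.1)) * B m r (i, y.1)) *
            (star (C m s (j, p.2)) * C m s (i, y.2))))
        = ∑ u : Fin dAp × Fin dBp, ∑ p : Fin dAp × Fin dBp, ∑ m, ∑ r, ∑ s,
            ∑ y : Fin dAp × Fin dBp, (q m : ℂ) *
              (Ukl (j,j) u p * star (Ukl (i,i) u y) *
                (star (B m r (j, p.1)) * B m r (i, y.1)) *
                (star (C m s (j, p.2)) * C m s (i, y.2)))
      from Finset.sum_congr rfl fun u _ => Finset.sum_congr rfl fun p _ => tso_comm3 _]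
    rw [show (∑ u : Fin dAp × Fin dBp, ∑ p : Fin dAp × Fin dBp, ∑ m, ∑ r, ∑ s,
        ∑ y : Fin dAp × Fin dBp, (q m : ℂ) *
          (Ukl (j,j) u p * star (Ukl (i,i) u y) *
            (star (B m r (j, p.1)) * B m r (i, y.1)) *
            (star (C m s (j, p.2)) * C m s (i, y.2))))
        = ∑ u : Fin dAp × Fin dBp, ∑ m, ∑ r, ∑ s, ∑ p : Fin dAp × Fin dBp,
            ∑ y : Fin dAp × Fin dBp, (q m : ℂ) *
              (Ukl (j,j) u p * star (Ukl (i,i) u y) *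
                (star (B m r (j, p.1)) * B m r (i, y.1)) *
                (star (C m s (j, p.2)) * C m s (i, y.2)))
      from Finset.sum_congr rfl fun u _ => tso_comm3 _]
    exact tso_comm3 _
  rw [step3]
  apply Finset.sum_congr rfl; intro m _
  rw [Fintype.sum_prod_type
    (f := fun x : ((Fin d × Fin dAp) × (Fin d × Fin dBp)) × (Fin dAp × Fin dBp) =>
      star (tsoVec B C Ukl m j x) * tsoVec B C Ukl m i x)]
  rw [Fintype.sum_prod_type
    (f := fun rs : (Fin d × Fin dAp) × (Fin d × Fin dBp) =>
      ∑ u : Fin dAp × Fin dBp, star (tsoVec B C Ukl m j (rs, u)) * tsoVec B C Ukl m i (rs, u))]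
  rw [Finset.mul_sum]
  apply Finset.sum_congr rfl; intro r _
  rw [Finset.mul_sum]
  apply Finset.sum_congr rfl; intro s _
  rw [Finset.mul_sum]
  apply Finset.sum_congr rfl; intro u _
  simp only [← Finset.mul_sum]
  congr 1
  unfold tsoVec
  rw [star_sum]
  rw [Finset.sum_mul_sum]
  apply Finset.sum_congr rfl; intro p _
  apply Finset.sum_congr rfl; intro y _
  simp only [star_mul', star_star]
  ring

lemma tso_normSq_vec {d dAp dBp N : ℕ}
    (B : Fin N → Matrix (Fin d × Fin dAp) (Fin d × Fin dAp) ℂ)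
    (C : Fin N → Matrix (Fin d × Fin dBp) (Fin d × Fin dBp) ℂ)
    (Ukl : Fin d × Fin d → Matrix (Fin dAp × Fin dBp) (Fin dAp × Fin dBp) ℂ)
    (m : Fin N) (i : Fin d)
    (hUd : ∀ p y : Fin dAp × Fin dBp,
      ∑ u : Fin dAp × Fin dBp, Ukl (i,i) u p * star (Ukl (i,i) u y) = if p = y then 1 else 0) :
    ∑ x : ((Fin d × Fin dAp) × (Fin d × Fin dBp)) × (Fin dAp × Fin dBp),
        Complex.normSq (tsoVec B C Ukl m i x)
      = (∑ r, ∑ p1 : Fin dAp, Complex.normSq (B m r (i, p1))) *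
        (∑ s, ∑ p2 : Fin dBp, Complex.normSq (C m s (i, p2))) := by
  set v := tsoVec B C Ukl m i with hvdef
  have hv : ∀ x, v x = ∑ y : Fin dAp × Fin dBp,
      star (Ukl (i,i) x.2 y) * (B m x.1.1 (i, y.1) * C m x.1.2 (i, y.2)) := fun _ => rfl
  have expand : ∀ (u : Fin dAp × Fin dBp) (r : Fin d × Fin dAp) (s : Fin d × Fin dBp),
      star (v ((r,s),u)) * v ((r,s),u)
      = ∑ p : Fin dAp × Fin dBp, ∑ y : Fin dAp × Fin dBp,
          (Ukl (i,i) u p * star (Ukl (i,i) u y)) *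
            (star (B m r (i,p.1)) * B m r (i,y.1) * (star (C m s (i,p.2)) * C m s (i,y.2))) := by
    intro u r s
    rw [hv]
    dsimp only
    rw [star_sum, Finset.sum_mul_sum]
    apply Finset.sum_congr rfl; intro p _
    apply Finset.sum_congr rfl; intro y _
    simp only [star_mul', star_star]
    ring
  have inner : ∀ (r : Fin d × Fin dAp) (s : Fin d × Fin dBp),
      (∑ u : Fin dAp × Fin dBp, star (v ((r,s),u)) * v ((r,s),u))
      = ∑ p : Fin dAp × Fin dBp,
          star (B m r (i,p.1)) * B m r (i,p.1) * (star (C m s (i,p.2)) * C m s (i,p.2)) := by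
    intro r s
    simp only [expand]
    rw [tso_comm2]
    have collapse : ∀ p : Fin dAp × Fin dBp,
        (∑ y : Fin dAp × Fin dBp, ∑ u : Fin dAp × Fin dBp,
          (Ukl (i,i) u p * star (Ukl (i,i) u y)) *
            (star (B m r (i,p.1)) * B m r (i,y.1) * (star (C m s (i,p.2)) * C m s (i,y.2))))
        = star (B m r (i,p.1)) * B m r (i,p.1) * (star (C m s (i,p.2)) * C m s (i,p.2)) := by
      intro p
      have hy : ∀ y, (∑ u : Fin dAp × Fin dBp,
          (Ukl (i,i) u p * star (Ukl (i,i) u y)) *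
            (star (B m r (i,p.1)) * B m r (i,y.1) * (star (C m s (i,p.2)) * C m s (i,y.2))))
          = (if p = y then (1:ℂ) else 0) *
            (star (B m r (i,p.1)) * B m r (i,y.1) * (star (C m s (i,p.2)) * C m s (i,y.2))) := by
        intro y
        rw [← Finset.sum_mul, hUd]
      simp only [hy, ite_mul, one_mul, zero_mul, Finset.sum_ite_eq, Finset.mem_univ, if_true]
    exact Finset.sum_congr rfl fun p _ => collapse p
  have key : (∑ x : ((Fin d × Fin dAp) × (Fin d × Fin dBp)) × (Fin dAp × Fin dBp),
      star (v x) * v x)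
      = ((∑ r, ∑ p1 : Fin dAp, Complex.normSq (B m r (i, p1)) : ℝ) : ℂ) *
        ((∑ s, ∑ p2 : Fin dBp, Complex.normSq (C m s (i, p2)) : ℝ) : ℂ) := by
    rw [Fintype.sum_prod_type
      (f := fun x : ((Fin d × Fin dAp) × (Fin d × Fin dBp)) × (Fin dAp × Fin dBp) =>
        star (v x) * v x)]
    rw [Fintype.sum_prod_type
      (f := fun rs : (Fin d × Fin dAp) × (Fin d × Fin dBp) =>
        ∑ u : Fin dAp × Fin dBp, star (v (rs, u)) * v (rs, u))]
    simp only [inner]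
    push_cast
    rw [Finset.sum_mul_sum]
    apply Finset.sum_congr rfl; intro r _
    apply Finset.sum_congr rfl; intro s _
    rw [Finset.sum_mul_sum]
    rw [Fintype.sum_prod_type
      (f := fun p : Fin dAp × Fin dBp =>
        star (B m r (i,p.1)) * B m r (i,p.1) * (star (C m s (i,p.2)) * C m s (i,p.2)))]
    apply Finset.sum_congr rfl; intro p1 _
    apply Finset.sum_congr rfl; intro p2 _
    rw [tso_star_mul_self, tso_star_mul_self]
  have hfin : ((∑ x : ((Fin d × Fin dAp) × (Fin d × Fin dBp)) × (Fin dAp × Fin dBp),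
      Complex.normSq (v x) : ℝ) : ℂ)
      = ((∑ r, ∑ p1 : Fin dAp, Complex.normSq (B m r (i, p1)) : ℝ) : ℂ) *
        ((∑ s, ∑ p2 : Fin dBp, Complex.normSq (C m s (i, p2)) : ℝ) : ℂ) := by
    rw [← key]
    push_cast
    exact Finset.sum_congr rfl fun x _ => (tso_star_mul_self (v x)).symm
  exact_mod_cast hfin

open scoped MatrixOrder in
lemma tso_psd_eq_conjTranspose_mul_self {n : Type*} [Fintype n] {A : Matrix n n ℂ}
    (h : A.PosSemidef) : ∃ B : Matrix n n ℂ, A = Bᴴ * B := by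
  obtain ⟨B, hB⟩ := CStarAlgebra.nonneg_iff_eq_star_mul_self.mp h.nonneg
  exact ⟨B, hB⟩

/-- if `σ_sep` is separable with respect to the cut `AA'|BB'` and `U` is
any twisting controlled by the standard product basis of `AB`, then the reduced state
`σ_AB = Tr_{A'B'}(U σ_sep U†)` has overlap at most `1/d` with the maximally entangled
state: `Tr(P₊ σ_AB) ≤ 1/d`. -/
theorem twisted_separable_overlap_le {d dAp dBp : ℕ}
    (σsep : Matrix ((Fin d × Fin d) × (Fin dAp × Fin dBp))
      ((Fin d × Fin d) × (Fin dAp × Fin dBp)) ℂ)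
    (hsep : SepCutAApBBp σsep)
    (Ukl : Fin d × Fin d → Matrix (Fin dAp × Fin dBp) (Fin dAp × Fin dBp) ℂ)
    (hUkl : ∀ kl, Ukl kl ∈ Matrix.unitaryGroup (Fin dAp × Fin dBp) ℂ) :
    ((Pplus d *
        ptrace₂
          ((∑ kl : Fin d × Fin d, Matrix.single kl kl (1 : ℂ) ⊗ₖ Ukl kl) * σsep *
            (∑ kl : Fin d × Fin d, Matrix.single kl kl (1 : ℂ) ⊗ₖ Ukl kl)ᴴ)).trace).re
      ≤ 1 / (d : ℝ) := by
  obtain ⟨N, q, τ, ω, hq0, hq1, hτ, hω, hσ⟩ := hsep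
  choose B hB using fun m => (tso_psd_eq_conjTranspose_mul_self (hτ m).1)
  choose C hC using fun m => (tso_psd_eq_conjTranspose_mul_self (hω m).1)
  have hτe : ∀ m a b, τ m a b = ∑ r, star (B m r a) * B m r b := by
    intro m a b
    conv_lhs => rw [hB m]
    simp [Matrix.mul_apply, Matrix.conjTranspose_apply]
  have hωe : ∀ m a b, ω m a b = ∑ s, star (C m s a) * C m s b := by
    intro m a b
    conv_lhs => rw [hC m]
    simp [Matrix.mul_apply, Matrix.conjTranspose_apply]
  set Usum := ∑ kl : Fin d × Fin d, Matrix.single kl kl (1 : ℂ) ⊗ₖ Ukl kl with hUsum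
  have hU : ∀ (a b : Fin d × Fin d) (u v' : Fin dAp × Fin dBp),
      Usum (a, u) (b, v') = if a = b then Ukl a u v' else 0 := fun a b u v' =>
    tso_U_entry Ukl a b u v'
  -- the key matrix-element identity
  have hM : ∀ i j : Fin d,
      ptrace₂ (Usum * σsep * Usumᴴ) (j, j) (i, i)
        = ∑ m, (q m : ℂ) * ∑ x : ((Fin d × Fin dAp) × (Fin d × Fin dBp)) × (Fin dAp × Fin dBp),
            star (tsoVec B C Ukl m j x) * tsoVec B C Ukl m i x := by
    intro i j
    have h1 : ptrace₂ (Usum * σsep * Usumᴴ) (j, j) (i, i)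
        = ∑ u : Fin dAp × Fin dBp, (Usum * σsep * Usumᴴ) ((j,j), u) ((i,i), u) := rfl
    rw [h1]
    have h2 : ∀ u : Fin dAp × Fin dBp, (Usum * σsep * Usumᴴ) ((j,j), u) ((i,i), u)
        = ∑ p : Fin dAp × Fin dBp, ∑ y : Fin dAp × Fin dBp,
            Ukl (j,j) u p * σsep ((j,j), p) ((i,i), y) * star (Ukl (i,i) u y) := fun u =>
      tso_prod_entry σsep Usum Ukl hU (j,j) (i,i) u u
    simp only [h2]
    have h3 : ∀ (p y : Fin dAp × Fin dBp), σsep ((j,j), p) ((i,i), y)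
        = ∑ m, (q m : ℂ) *
            ((∑ r, star (B m r (j, p.1)) * B m r (i, y.1)) *
             (∑ s, star (C m s (j, p.2)) * C m s (i, y.2))) := by
      intro p y
      rw [hσ ((j,j), p) ((i,i), y)]
      apply Finset.sum_congr rfl; intro m _
      congr 1
      dsimp only
      rw [hτe, hωe]
    simp only [h3]
    exact tso_key_identity q B C Ukl i j
  -- aggregate
  have agg : (∑ i : Fin d, ∑ j : Fin d, ∑ m, (q m : ℂ) *
        ∑ x : ((Fin d × Fin dAp) × (Fin d × Fin dBp)) × (Fin dAp × Fin dBp),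
          star (tsoVec B C Ukl m j x) * tsoVec B C Ukl m i x)
      = ∑ m, (q m : ℂ) *
          ∑ x : ((Fin d × Fin dAp) × (Fin d × Fin dBp)) × (Fin dAp × Fin dBp),
            star (∑ i, tsoVec B C Ukl m i x) * (∑ i, tsoVec B C Ukl m i x) := by
    rw [tso_comm2 (F := fun i j m => (q m : ℂ) *
        ∑ x : ((Fin d × Fin dAp) × (Fin d × Fin dBp)) × (Fin dAp × Fin dBp),
          star (tsoVec B C Ukl m j x) * tsoVec B C Ukl m i x)]
    rw [tso_comm2 (F := fun j m i => (q m : ℂ) *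
        ∑ x : ((Fin d × Fin dAp) × (Fin d × Fin dBp)) × (Fin dAp × Fin dBp),
          star (tsoVec B C Ukl m j x) * tsoVec B C Ukl m i x)]
    apply Finset.sum_congr rfl; intro m _
    simp only [← Finset.mul_sum]
    congr 1
    rw [tso_comm2 (F := fun i j x =>
        star (tsoVec B C Ukl m j x) * tsoVec B C Ukl m i x)]
    rw [tso_comm2 (F := fun j x i =>
        star (tsoVec B C Ukl m j x) * tsoVec B C Ukl m i x)]
    apply Finset.sum_congr rfl; intro x _
    calc (∑ i, ∑ j, star (tsoVec B C Ukl m j x) * tsoVec B C Ukl m i x)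
        = ∑ j, ∑ i, star (tsoVec B C Ukl m j x) * tsoVec B C Ukl m i x := Finset.sum_comm
      _ = (∑ j, star (tsoVec B C Ukl m j x)) * (∑ i, tsoVec B C Ukl m i x) :=
          (Finset.sum_mul_sum _ _ _ _).symm
      _ = star (∑ j, tsoVec B C Ukl m j x) * (∑ i, tsoVec B C Ukl m i x) := by rw [star_sum]
  -- real quantities
  set n : Fin N → ℝ := fun m =>
    ∑ x : ((Fin d × Fin dAp) × (Fin d × Fin dBp)) × (Fin dAp × Fin dBp),
      Complex.normSq (∑ i, tsoVec B C Ukl m i x) with hn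
  have htrace : ((Pplus d * ptrace₂ (Usum * σsep * Usumᴴ)).trace)
      = (((d : ℝ)⁻¹ * ∑ m, q m * n m : ℝ) : ℂ) := by
    rw [tso_traceP]
    have : (∑ i : Fin d, ∑ j : Fin d, ptrace₂ (Usum * σsep * Usumᴴ) (j, j) (i, i))
        = ∑ m, (q m : ℂ) * ((n m : ℝ) : ℂ) := by
      simp only [hM]
      rw [agg]
      apply Finset.sum_congr rfl; intro m _
      congr 1
      rw [hn]
      push_cast
      exact Finset.sum_congr rfl fun x _ => tso_star_mul_self _
    rw [this]
    push_cast
    ring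
  -- bounds on n m
  set t : Fin N → Fin d → ℝ := fun m i =>
    ∑ r, ∑ p1 : Fin dAp, Complex.normSq (B m r (i, p1)) with ht
  set s : Fin N → Fin d → ℝ := fun m i =>
    ∑ ss, ∑ p2 : Fin dBp, Complex.normSq (C m ss (i, p2)) with hs
  have ht0 : ∀ m i, 0 ≤ t m i := fun m i =>
    Finset.sum_nonneg fun r _ => Finset.sum_nonneg fun p1 _ => Complex.normSq_nonneg _
  have hs0 : ∀ m i, 0 ≤ s m i := fun m i =>
    Finset.sum_nonneg fun ss _ => Finset.sum_nonneg fun p2 _ => Complex.normSq_nonneg _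
  have ht1 : ∀ m, (∑ i, t m i) = 1 := by
    intro m
    have hcx : ((∑ i, t m i : ℝ) : ℂ) = 1 := by
      have htr : (τ m).trace = ∑ i : Fin d, ∑ p1 : Fin dAp, τ m (i, p1) (i, p1) := by
        rw [Matrix.trace]
        rw [Fintype.sum_prod_type (f := fun a : Fin d × Fin dAp => (τ m).diag a)]
        rfl
      have h2 : ((∑ i, t m i : ℝ) : ℂ) = (τ m).trace := by
        rw [htr]
        push_cast
        apply Finset.sum_congr rfl; intro i _
        rw [ht]
        dsimp only
        push_cast
        rw [Finset.sum_comm]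
        apply Finset.sum_congr rfl; intro p1 _
        rw [hτe]
        exact Finset.sum_congr rfl fun r _ => (tso_star_mul_self _).symm
      rw [h2, (hτ m).2]
    exact_mod_cast hcx
  have hs1 : ∀ m, (∑ i, s m i) = 1 := by
    intro m
    have hcx : ((∑ i, s m i : ℝ) : ℂ) = 1 := by
      have htr : (ω m).trace = ∑ i : Fin d, ∑ p2 : Fin dBp, ω m (i, p2) (i, p2) := by
        rw [Matrix.trace]
        rw [Fintype.sum_prod_type (f := fun a : Fin d × Fin dBp => (ω m).diag a)]
        rfl
      have h2 : ((∑ i, s m i : ℝ) : ℂ) = (ω m).trace := by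
        rw [htr]
        push_cast
        apply Finset.sum_congr rfl; intro i _
        rw [hs]
        dsimp only
        push_cast
        rw [Finset.sum_comm]
        apply Finset.sum_congr rfl; intro p2 _
        rw [hωe]
        exact Finset.sum_congr rfl fun ss _ => (tso_star_mul_self _).symm
      rw [h2, (hω m).2]
    exact_mod_cast hcx
  have hvnorm : ∀ m i,
      (∑ x : ((Fin d × Fin dAp) × (Fin d × Fin dBp)) × (Fin dAp × Fin dBp),
        Complex.normSq (tsoVec B C Ukl m i x)) = t m i * s m i := by
    intro m i
    exact tso_normSq_vec B C Ukl m i (fun p y => tso_unitary_rows _ (hUkl (i,i)) p y)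
  have hnm : ∀ m, n m ≤ 1 := by
    intro m
    have h0 : 0 ≤ n m := Finset.sum_nonneg fun x _ => Complex.normSq_nonneg _
    have hsqrt : Real.sqrt (n m) ≤ 1 := by
      calc Real.sqrt (n m)
          ≤ ∑ i, Real.sqrt (∑ x : ((Fin d × Fin dAp) × (Fin d × Fin dBp)) × (Fin dAp × Fin dBp),
              Complex.normSq (tsoVec B C Ukl m i x)) := tso_sqrt_normSq_sum_le _
        _ = ∑ i, Real.sqrt (t m i) * Real.sqrt (s m i) := by
            apply Finset.sum_congr rfl; intro i _
            rw [hvnorm, Real.sqrt_mul (ht0 m i)]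
        _ ≤ Real.sqrt (∑ i, t m i) * Real.sqrt (∑ i, s m i) :=
            Real.sum_sqrt_mul_sqrt_le _ (fun i => ht0 m i) (fun i => hs0 m i)
        _ = 1 := by rw [ht1 m, hs1 m, Real.sqrt_one, mul_one]
    nlinarith [Real.sq_sqrt h0, Real.sqrt_nonneg (n m)]
  -- conclude
  rw [htrace, Complex.ofReal_re, one_div]
  have hsum_le : (∑ m, q m * n m) ≤ 1 := by
    calc (∑ m, q m * n m) ≤ ∑ m, q m :=
          Finset.sum_le_sum fun m _ => mul_le_of_le_one_right (hq0 m) (hnm m)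
      _ = 1 := hq1
  calc (d : ℝ)⁻¹ * ∑ m, q m * n m ≤ (d : ℝ)⁻¹ * 1 :=
        mul_le_mul_of_nonneg_left hsum_le (inv_nonneg.mpr (Nat.cast_nonneg d))
    _ = (d : ℝ)⁻¹ := mul_one _
end
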